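/- arXiv:2008.05379 — 2 statements merged into one kernel-verified Lean document; each statement's English description precedes it below -/
import Mathlib

section
/- Let E be a Dedekind complete vector lattice and let (T_n) be a sequence of orthomorphisms of E. Let S ⊆ E be nonempty with I_S = E (the ideal generated by S is all of E). Then T_n →o 0 in L_ob(E) if and only if T_n s →o 0 in E for every s ∈ S. In particular, when E has a strong order unit e, T_n →o 0 in Orth(E) if and only if T_n e →o 0 in E. -/
variable (E : Type*) [AddCommGroup E] [ConditionallyCompleteLattice E] [Module ℝ E]
  [CovariantClass E E (· + ·) (· ≤ ·)] [PosSMulMono ℝ E]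

/-- The order on order bounded operators: `A ≤ B` iff `A x ≤ B x` for all `x ≥ 0`. -/
def opLE (A B : E →ₗ[ℝ] E) : Prop := ∀ x : E, 0 ≤ x → A x ≤ B x

/-- An operator is order bounded when it maps order bounded sets to order bounded sets. -/
def IsOrderBoundedOp (T : E →ₗ[ℝ] E) : Prop :=
  ∀ a b : E, ∃ c d : E, ∀ x : E, a ≤ x → x ≤ b → c ≤ T x ∧ T x ≤ d

/-- Band preserving: `T x` lies in the band generated by `x`; equivalently `T x ⊥ y`
whenever `x ⊥ y`. -/
def IsBandPreserving (T : E →ₗ[ℝ] E) : Prop :=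
  ∀ x y : E, |x| ⊓ |y| = 0 → |T x| ⊓ |y| = 0

/-- An orthomorphism is an order bounded band preserving linear operator. -/
def IsOrthomorphism (T : E →ₗ[ℝ] E) : Prop :=
  IsOrderBoundedOp E T ∧ IsBandPreserving E T

/-- Membership in the band generated by a set `S` (in an Archimedean vector lattice this is
the double disjoint complement of `S`). -/
def memBandGen (S : Set E) (w : E) : Prop :=
  ∀ u : E, (∀ s ∈ S, |u| ⊓ |s| = 0) → |u| ⊓ |w| = 0

/-- `P` is the band projection onto the band `B`: it maps into `B` and `x - P x` is
disjoint from `B` for every `x`. -/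
def IsBandProjectionOnto (B : Set E) (P : E →ₗ[ℝ] E) : Prop :=
  (∀ x : E, P x ∈ B) ∧ (∀ x : E, ∀ b ∈ B, |x - P x| ⊓ |b| = 0)

/-- Order convergence of a net: there is a downward directed set `D` with infimum `0`
such that the net is eventually dominated by every member of `D`. -/
def OrderConvNet {ι : Type*} [Preorder ι] (y : ι → E) (l : E) : Prop :=
  ∃ D : Set E, D.Nonempty ∧ DirectedOn (· ≥ ·) D ∧ IsGLB D 0 ∧
    ∀ d ∈ D, ∃ i₀ : ι, ∀ i : ι, i₀ ≤ i → |y i - l| ≤ d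

/-- Unbounded order convergence of a net. -/
def UOConvNet {ι : Type*} [Preorder ι] (y : ι → E) (l : E) : Prop :=
  ∀ u : E, 0 ≤ u → OrderConvNet E (fun i => |y i - l| ⊓ u) 0

/-- Order convergence of a net of operators, in the operator order of the order bounded
operators: there is a downward directed set `D` of operators whose infimum among the
order bounded operators is `0`, eventually dominating `|T i - L|`. -/
def OpOrderConvNet {ι : Type*} [Preorder ι] (T : ι → E →ₗ[ℝ] E) (L : E →ₗ[ℝ] E) : Prop :=
  ∃ D : Set (E →ₗ[ℝ] E), D.Nonempty ∧
    DirectedOn (fun A B => opLE E B A) D ∧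
    (∀ d ∈ D, opLE E 0 d) ∧
    (∀ C : E →ₗ[ℝ] E, IsOrderBoundedOp E C → (∀ d ∈ D, opLE E C d) → opLE E C 0) ∧
    ∀ d ∈ D, ∃ i₀ : ι, ∀ i : ι, i₀ ≤ i → opLE E (L - T i) d ∧ opLE E (T i - L) d

set_option linter.unusedSectionVars false
set_option linter.unusedVariables false
set_option maxHeartbeats 1000000

section VLatticeDevelopment

variable {E : Type*} [AddCommGroup E] [ConditionallyCompleteLattice E] [Module ℝ E]
  [CovariantClass E E (· + ·) (· ≤ ·)] [PosSMulMono ℝ E]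

lemma vl_abs_add (a b : E) : |a + b| ≤ |a| + |b| := by
  rw [abs]
  refine sup_le (add_le_add (le_abs_self a) (le_abs_self b)) ?_
  rw [neg_add]
  exact add_le_add (neg_le_abs a) (neg_le_abs b)

lemma vl_abs_sub (a b : E) : |a - b| ≤ |a| + |b| := by
  rw [sub_eq_add_neg]
  simpa using vl_abs_add a (-b)

lemma vl_smul_mono_right {t s : ℝ} (h : t ≤ s) {b : E} (hb : 0 ≤ b) : t • b ≤ s • b := by
  have h1 : 0 ≤ (s - t) • b := smul_nonneg (by linarith) hb
  calc t • b ≤ t • b + (s - t) • b := le_add_of_nonneg_right h1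
  _ = s • b := by rw [← add_smul]; ring_nf

lemma vl_smul_sup {t : ℝ} (ht : 0 ≤ t) (a b : E) : t • (a ⊔ b) = t • a ⊔ t • b := by
  rcases eq_or_lt_of_le ht with h | h
  · simp [← h]
  · have hne : t ≠ 0 := ne_of_gt h
    have h1 : t • a ⊔ t • b ≤ t • (a ⊔ b) :=
      sup_le (smul_le_smul_of_nonneg_left le_sup_left ht)
        (smul_le_smul_of_nonneg_left le_sup_right ht)
    have h2 : a ⊔ b ≤ t⁻¹ • (t • a ⊔ t • b) := by
      refine sup_le ?_ ?_
      · have := smul_le_smul_of_nonneg_left (le_sup_left : t • a ≤ t • a ⊔ t • b)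
          (by positivity : (0:ℝ) ≤ t⁻¹)
        simpa [inv_smul_smul₀ hne] using this
      · have := smul_le_smul_of_nonneg_left (le_sup_right : t • b ≤ t • a ⊔ t • b)
          (by positivity : (0:ℝ) ≤ t⁻¹)
        simpa [inv_smul_smul₀ hne] using this
    have h3 : t • (a ⊔ b) ≤ t • (t⁻¹ • (t • a ⊔ t • b)) :=
      smul_le_smul_of_nonneg_left h2 ht
    rw [smul_inv_smul₀ hne] at h3
    exact le_antisymm h3 h1

lemma vl_smul_inf {t : ℝ} (ht : 0 ≤ t) (a b : E) : t • (a ⊓ b) = t • a ⊓ t • b := by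
  rcases eq_or_lt_of_le ht with h | h
  · simp [← h]
  · have hne : t ≠ 0 := ne_of_gt h
    have h1 : t • (a ⊓ b) ≤ t • a ⊓ t • b :=
      le_inf (smul_le_smul_of_nonneg_left inf_le_left ht)
        (smul_le_smul_of_nonneg_left inf_le_right ht)
    have h2 : t⁻¹ • (t • a ⊓ t • b) ≤ a ⊓ b := by
      refine le_inf ?_ ?_
      · have := smul_le_smul_of_nonneg_left (inf_le_left : t • a ⊓ t • b ≤ t • a)
          (by positivity : (0:ℝ) ≤ t⁻¹)
        simpa [inv_smul_smul₀ hne] using this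
      · have := smul_le_smul_of_nonneg_left (inf_le_right : t • a ⊓ t • b ≤ t • b)
          (by positivity : (0:ℝ) ≤ t⁻¹)
        simpa [inv_smul_smul₀ hne] using this
    have h3 : t • (t⁻¹ • (t • a ⊓ t • b)) ≤ t • (a ⊓ b) :=
      smul_le_smul_of_nonneg_left h2 ht
    rw [smul_inv_smul₀ hne] at h3
    exact le_antisymm h1 h3

lemma vl_smul_posPart {t : ℝ} (ht : 0 ≤ t) (a : E) : (t • a)⁺ = t • a⁺ := by
  rw [posPart_def, posPart_def, vl_smul_sup ht, smul_zero]

lemma vl_smul_negPart {t : ℝ} (ht : 0 ≤ t) (a : E) : (t • a)⁻ = t • a⁻ := by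
  rw [← posPart_neg, ← posPart_neg, ← smul_neg, vl_smul_posPart ht]

lemma vl_smul_abs {t : ℝ} (ht : 0 ≤ t) (a : E) : |t • a| = t • |a| := by
  rw [abs, abs, vl_smul_sup ht, smul_neg]

lemma vl_inf_add_le {a b c : E} (ha : 0 ≤ a) (hb : 0 ≤ b) (hc : 0 ≤ c) :
    (a + b) ⊓ c ≤ a ⊓ c + b ⊓ c := by
  have hr : a ⊓ c + b ⊓ c = ((a + b) ⊓ (a + c)) ⊓ ((c + b) ⊓ (c + c)) := by
    rw [inf_add a c (b ⊓ c), add_inf b c a, add_inf b c c]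
  rw [hr]
  refine le_inf (le_inf inf_le_left ?_) (le_inf ?_ ?_)
  · exact inf_le_right.trans (le_add_of_nonneg_left ha)
  · exact inf_le_right.trans (le_add_of_nonneg_right hb)
  · exact inf_le_right.trans (le_add_of_nonneg_right hc)

lemma vl_inf_add_le' {a b c : E} (ha : 0 ≤ a) (hb : 0 ≤ b) (hc : 0 ≤ c) :
    c ⊓ (a + b) ≤ c ⊓ a + c ⊓ b := by
  rw [inf_comm c (a+b), inf_comm c a, inf_comm c b]
  exact vl_inf_add_le ha hb hc

lemma vl_inf_nsmul_zero {a b : E} (ha : 0 ≤ a) (hb : 0 ≤ b) (h : a ⊓ b = 0) (n : ℕ) :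
    a ⊓ (n • b) = 0 := by
  induction n with
  | zero => rw [zero_nsmul]; exact inf_eq_right.2 ha
  | succ n ih =>
    have h1 : a ⊓ ((n+1) • b) ≤ a ⊓ (n • b) + a ⊓ b := by
      rw [succ_nsmul]
      exact vl_inf_add_le' (nsmul_nonneg hb n) hb ha
    rw [ih, h, add_zero] at h1
    exact le_antisymm h1 (le_inf ha (nsmul_nonneg hb _))

lemma vl_inf_smul_zero {a b : E} (ha : 0 ≤ a) (hb : 0 ≤ b) (h : a ⊓ b = 0) {t : ℝ}
    (ht : 0 ≤ t) : a ⊓ (t • b) = 0 := by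
  obtain ⟨n, hn⟩ := exists_nat_ge t
  have h1 : t • b ≤ (n:ℝ) • b := vl_smul_mono_right hn hb
  have h2 : a ⊓ (t • b) ≤ a ⊓ ((n:ℝ) • b) := inf_le_inf_left a h1
  rw [Nat.cast_smul_eq_nsmul, vl_inf_nsmul_zero ha hb h n] at h2
  exact le_antisymm h2 (le_inf ha (smul_nonneg ht hb))

lemma vl_disj_of_le_add {z a b c : E} (hz : 0 ≤ z) (hza : z ≤ a + b) (h0a : 0 ≤ a)
    (h0b : 0 ≤ b) (h0c : 0 ≤ c) (hac : a ⊓ c = 0) (hbc : b ⊓ c = 0) : z ⊓ c = 0 := by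
  have h1 : z ⊓ c ≤ (a + b) ⊓ c := inf_le_inf_right c hza
  have h2 : (a + b) ⊓ c ≤ a ⊓ c + b ⊓ c := vl_inf_add_le h0a h0b h0c
  rw [hac, hbc, add_zero] at h2
  exact le_antisymm (h1.trans h2) (le_inf hz h0c)

lemma vl_posPart_of_disjoint {p q : E} (h : p ⊓ q = 0) : (p - q)⁺ = p := by
  rw [posPart_def, sub_eq_add_neg, show (0:E) = p + -p from by simp, ← add_sup, ← neg_inf,
    inf_comm q p, h, neg_zero, add_zero]

lemma vl_negPart_of_disjoint {p q : E} (h : p ⊓ q = 0) : (p - q)⁻ = q := by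
  rw [← posPart_neg, neg_sub, vl_posPart_of_disjoint (by rwa [inf_comm])]

lemma vl_cross_posPart {a b : E} (h1 : a⁺ ⊓ b⁻ = 0) (h2 : a⁻ ⊓ b⁺ = 0) :
    (a + b)⁺ = a⁺ + b⁺ ∧ (a + b)⁻ = a⁻ + b⁻ ∧ |a + b| = |a| + |b| := by
  have hd : (a⁺ + b⁺) ⊓ (a⁻ + b⁻) = 0 := by
    refine le_antisymm ?_ (le_inf (by positivity) (by positivity))
    have e1 : (a⁺ + b⁺) ⊓ (a⁻ + b⁻) ≤ a⁺ ⊓ (a⁻ + b⁻) + b⁺ ⊓ (a⁻ + b⁻) :=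
      vl_inf_add_le (posPart_nonneg a) (posPart_nonneg b) (by positivity)
    have e2 : a⁺ ⊓ (a⁻ + b⁻) ≤ a⁺ ⊓ a⁻ + a⁺ ⊓ b⁻ :=
      vl_inf_add_le' (negPart_nonneg a) (negPart_nonneg b) (posPart_nonneg a)
    have e3 : b⁺ ⊓ (a⁻ + b⁻) ≤ b⁺ ⊓ a⁻ + b⁺ ⊓ b⁻ :=
      vl_inf_add_le' (negPart_nonneg a) (negPart_nonneg b) (posPart_nonneg b)
    rw [posPart_inf_negPart_eq_zero, h1, add_zero] at e2
    rw [inf_comm b⁺ a⁻] at e3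
    rw [h2, posPart_inf_negPart_eq_zero, add_zero] at e3
    calc (a⁺ + b⁺) ⊓ (a⁻ + b⁻) ≤ _ + _ := e1
    _ ≤ 0 + 0 := add_le_add e2 e3
    _ = 0 := by rw [add_zero]
  have hab : a + b = (a⁺ + b⁺) - (a⁻ + b⁻) := by
    have h' : a⁺ - a⁻ + (b⁺ - b⁻) = (a⁺ + b⁺) - (a⁻ + b⁻) := by abel
    rwa [posPart_sub_negPart, posPart_sub_negPart] at h'
  have e1 : (a + b)⁺ = a⁺ + b⁺ := by rw [hab, vl_posPart_of_disjoint hd]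
  have e2 : (a + b)⁻ = a⁻ + b⁻ := by rw [hab, vl_negPart_of_disjoint hd]
  refine ⟨e1, e2, ?_⟩
  rw [← posPart_add_negPart (a+b), e1, e2, ← posPart_add_negPart a, ← posPart_add_negPart b]
  abel

lemma vl_cross_of_abs_disjoint {a b : E} (h : |a| ⊓ |b| = 0) :
    a⁺ ⊓ b⁻ = 0 ∧ a⁻ ⊓ b⁺ = 0 := by
  have hpa : a⁺ ≤ |a| := posPart_def a ▸ sup_le (le_abs_self a) (abs_nonneg a)
  have hna : a⁻ ≤ |a| := by
    rw [← posPart_neg, ← abs_neg]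
    exact posPart_def (-a) ▸ sup_le (le_abs_self (-a)) (abs_nonneg (-a))
  have hpb : b⁺ ≤ |b| := posPart_def b ▸ sup_le (le_abs_self b) (abs_nonneg b)
  have hnb : b⁻ ≤ |b| := by
    rw [← posPart_neg, ← abs_neg]
    exact posPart_def (-b) ▸ sup_le (le_abs_self (-b)) (abs_nonneg (-b))
  constructor
  · exact le_antisymm (h ▸ inf_le_inf hpa hnb) (le_inf (posPart_nonneg a) (negPart_nonneg b))
  · exact le_antisymm (h ▸ inf_le_inf hna hpb) (le_inf (negPart_nonneg a) (posPart_nonneg b))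

lemma vl_abs_add_of_disjoint {a b : E} (h : |a| ⊓ |b| = 0) : |a + b| = |a| + |b| :=
  (vl_cross_posPart (vl_cross_of_abs_disjoint h).1 (vl_cross_of_abs_disjoint h).2).2.2

lemma vl_posPart_add_of_disjoint {a b : E} (h : |a| ⊓ |b| = 0) : (a + b)⁺ = a⁺ + b⁺ :=
  (vl_cross_posPart (vl_cross_of_abs_disjoint h).1 (vl_cross_of_abs_disjoint h).2).1

lemma vl_arch {u K : E} (hu : 0 ≤ u) (h : ∀ n : ℕ, n • u ≤ K) : u ≤ 0 := by
  have hbdd : BddAbove (Set.range fun n : ℕ => n • u) := ⟨K, by rintro _ ⟨n, rfl⟩; exact h n⟩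
  set s := ⨆ n : ℕ, n • u with hs
  have h1 : ∀ n : ℕ, n • u ≤ s - u := by
    intro n
    have : (n+1) • u ≤ s := le_ciSup hbdd (n+1)
    rw [succ_nsmul] at this
    exact le_sub_iff_add_le.2 this
  have h2 : s ≤ s - u := ciSup_le h1
  have h3 : s + u ≤ s := le_sub_iff_add_le.1 h2
  exact (add_le_iff_nonpos_right s).1 h3

lemma vl_inf_lip {b c s : E} (h : c ≤ s) : b ⊓ s ≤ b ⊓ c + (s - c) := by
  have key : b ⊓ s + c ≤ b ⊓ c + s := by
    rw [inf_add b s c, inf_add b c s]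
    exact le_inf ((inf_le_left).trans (add_le_add_right h b))
      (inf_le_right.trans (le_of_eq (add_comm s c)))
  calc b ⊓ s = b ⊓ s + c - c := by abel
  _ ≤ b ⊓ c + s - c := by exact sub_le_sub_right key c
  _ = b ⊓ c + (s - c) := by abel

lemma vl_inf_ciSup_le {c : ℕ → E} (hb : BddAbove (Set.range c)) {b t : E}
    (h : ∀ n, b ⊓ c n ≤ t) : b ⊓ (⨆ n, c n) ≤ t := by
  set s := ⨆ n, c n with hs
  set r := b ⊓ s - t with hr
  have h1 : ∀ n, c n ≤ s - r := by
    intro n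
    have l1 : b ⊓ s ≤ b ⊓ c n + (s - c n) := vl_inf_lip (le_ciSup hb n)
    have l2 : b ⊓ s ≤ t + (s - c n) := l1.trans (add_le_add_left (h n) _)
    have l3 : r ≤ s - c n := by
      rw [hr]
      have := sub_le_sub_right l2 t
      calc b ⊓ s - t ≤ t + (s - c n) - t := this
      _ = s - c n := by abel
    exact le_sub_comm.1 l3
  have h2 : s ≤ s - r := ciSup_le h1
  have h3 : r ≤ 0 := (add_le_iff_nonpos_right s).1 (le_sub_iff_add_le.1 h2)
  rw [hr] at h3
  exact sub_nonpos.1 h3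

lemma vl_posPart_le_abs (a : E) : a⁺ ≤ |a| :=
  posPart_def a ▸ sup_le (le_abs_self a) (abs_nonneg a)

lemma vl_negPart_le_abs (a : E) : a⁻ ≤ |a| := by
  rw [← posPart_neg, ← abs_neg]; exact vl_posPart_le_abs (-a)

variable {E : Type*} [AddCommGroup E] [ConditionallyCompleteLattice E] [Module ℝ E]
  [CovariantClass E E (· + ·) (· ≤ ·)] [PosSMulMono ℝ E]

/-- Key inequality: if `0 ≤ u ≤ a⁺` and `u ≤ b⁻` then `(1+t)u ≤ (a - t b)⁺`. -/
lemma vl_key {u a b : E} (hu : 0 ≤ u) (h1 : u ≤ a⁺) (h2 : u ≤ b⁻) {t : ℝ} (ht : 0 ≤ t) :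
    (1 + t) • u ≤ (a - t • b)⁺ := by
  have hu1 : u ⊓ a⁻ = 0 := by
    refine le_antisymm ?_ (le_inf hu (negPart_nonneg a))
    calc u ⊓ a⁻ ≤ a⁺ ⊓ a⁻ := inf_le_inf_right _ h1
    _ = 0 := posPart_inf_negPart_eq_zero a
  have hu2 : u ⊓ b⁺ = 0 := by
    refine le_antisymm ?_ (le_inf hu (posPart_nonneg b))
    calc u ⊓ b⁺ ≤ b⁻ ⊓ b⁺ := inf_le_inf_right _ h2
    _ = 0 := by rw [inf_comm]; exact posPart_inf_negPart_eq_zero b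
  have hsm : u ⊓ (t • b⁺) = 0 := vl_inf_smul_zero hu (posPart_nonneg b) hu2 ht
  have hW0 : 0 ≤ a⁻ + t • b⁺ := add_nonneg (negPart_nonneg a) (smul_nonneg ht (posPart_nonneg b))
  have huW : (a⁻ + t • b⁺) ⊓ u = 0 := by
    refine vl_disj_of_le_add hW0 le_rfl (negPart_nonneg a)
      (smul_nonneg ht (posPart_nonneg b)) hu ?_ ?_
    · rw [inf_comm]; exact hu1
    · rw [inf_comm]; exact hsm
  have hscaleW : ((1 + t) • u) ⊓ (a⁻ + t • b⁺) = 0 := by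
    rw [inf_comm]
    exact vl_inf_smul_zero hW0 hu huW (by linarith)
  have hX : (1 + t) • u ≤ a⁺ + t • b⁻ := by
    rw [add_smul, one_smul]
    exact add_le_add h1 (smul_le_smul_of_nonneg_left h2 ht)
  have hrepr : a - t • b = (a⁺ + t • b⁻) - (a⁻ + t • b⁺) := by
    have h' : (a⁺ - a⁻) - t • (b⁺ - b⁻) = (a⁺ + t • b⁻) - (a⁻ + t • b⁺) := by
      rw [smul_sub]; abel
    rwa [posPart_sub_negPart, posPart_sub_negPart] at h'
  have hmono : ((1 + t) • u - (a⁻ + t • b⁺))⁺ ≤ (a - t • b)⁺ := by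
    rw [hrepr]; exact posPart_mono (sub_le_sub_right hX _)
  rwa [vl_posPart_of_disjoint hscaleW] at hmono

lemma vl_sum_nonneg {F : Finset ℕ} {g : ℕ → E} (h : ∀ i ∈ F, 0 ≤ g i) : 0 ≤ F.sum g := by
  refine Finset.sum_induction g (fun z => 0 ≤ z) (fun a b ha hb => add_nonneg ha hb) le_rfl h

lemma vl_inf_sum_zero {k : ℕ} {d : ℕ → E} {c : E} (hc : 0 ≤ c)
    (hpos : ∀ i, i < k → 0 ≤ d i) (hz : ∀ i, i < k → d i ⊓ c = 0) :
    (Finset.range k).sum d ⊓ c = 0 := by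
  induction k with
  | zero => simpa using inf_eq_left.2 hc
  | succ k ih =>
    have hS0 : 0 ≤ (Finset.range k).sum d :=
      vl_sum_nonneg fun i hi => hpos i ((Finset.mem_range.1 hi).trans (Nat.lt_succ_self k))
    have h1 : (Finset.range (k+1)).sum d ⊓ c ≤ (Finset.range k).sum d ⊓ c + d k ⊓ c := by
      rw [Finset.sum_range_succ]
      exact vl_inf_add_le hS0 (hpos k (Nat.lt_succ_self k)) hc
    rw [ih (fun i hi => hpos i (hi.trans (Nat.lt_succ_self k)))
      (fun i hi => hz i (hi.trans (Nat.lt_succ_self k))), hz k (Nat.lt_succ_self k),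
      add_zero] at h1
    refine le_antisymm h1 (le_inf ?_ hc)
    exact vl_sum_nonneg fun i hi => hpos i (Finset.mem_range.1 hi)

lemma vl_sum_disjoint {k : ℕ} {d : ℕ → E} {t : E} (ht : 0 ≤ t)
    (hpos : ∀ i, i < k → 0 ≤ d i) (hdisj : ∀ i j, i < j → j < k → d i ⊓ d j = 0)
    (hle : ∀ i, i < k → d i ≤ t) : (Finset.range k).sum d ≤ t := by
  induction k with
  | zero => simpa using ht
  | succ k ih =>
    have hSd : (Finset.range k).sum d ⊓ d k = 0 :=
      vl_inf_sum_zero (hpos k (Nat.lt_succ_self k))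
        (fun i hi => hpos i (hi.trans (Nat.lt_succ_self k)))
        (fun i hi => hdisj i k hi (Nat.lt_succ_self k))
    have hsup : (Finset.range k).sum d + d k = (Finset.range k).sum d ⊔ d k := by
      rw [← inf_add_sup, hSd, zero_add]
    rw [Finset.sum_range_succ, hsup]
    exact sup_le (ih (fun i hi => hpos i (hi.trans (Nat.lt_succ_self k)))
      (fun i j hij hj => hdisj i j hij (hj.trans (Nat.lt_succ_self k)))
      (fun i hi => hle i (hi.trans (Nat.lt_succ_self k)))) (hle k (Nat.lt_succ_self k))

section ExtMap

variable (f : E → E)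

/-- Extension of an additive positively-homogeneous map on the positive cone to a linear map. -/
noncomputable def extMap
    (hadd : ∀ x y : E, 0 ≤ x → 0 ≤ y → f (x + y) = f x + f y)
    (hsmul : ∀ (t : ℝ) (x : E), 0 ≤ t → 0 ≤ x → f (t • x) = t • f x) : E →ₗ[ℝ] E where
  toFun v := f v⁺ - f v⁻
  map_add' x y := by
    have hz : f 0 = 0 := by
      have := hadd 0 0 le_rfl le_rfl
      rw [add_zero] at this
      have h2 := congrArg (· - f 0) this
      simpa using h2.symm
    have key : (x+y)⁺ + (x⁻ + y⁻) = x⁺ + y⁺ + (x+y)⁻ := by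
      have h' : (x+y)⁺ - (x+y)⁻ = (x⁺ - x⁻) + (y⁺ - y⁻) := by
        rw [posPart_sub_negPart, posPart_sub_negPart, posPart_sub_negPart]
      have h2 : (x+y)⁺ = (x⁺ - x⁻) + (y⁺ - y⁻) + (x+y)⁻ := by
        rw [← h']; abel
      rw [h2]; abel
    have happ := congrArg f key
    rw [hadd _ _ (posPart_nonneg _) (add_nonneg (negPart_nonneg _) (negPart_nonneg _)),
      hadd _ _ (negPart_nonneg _) (negPart_nonneg _),
      hadd _ _ (add_nonneg (posPart_nonneg _) (posPart_nonneg _)) (negPart_nonneg _),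
      hadd _ _ (posPart_nonneg _) (posPart_nonneg _)] at happ
    -- happ : f (x+y)⁺ + (f x⁻ + f y⁻) = f x⁺ + f y⁺ + f (x+y)⁻
    have goal' : f (x+y)⁺ - f (x+y)⁻ = (f x⁺ - f x⁻) + (f y⁺ - f y⁻) := by
      have h3 : f (x+y)⁺ = f x⁺ + f y⁺ + f (x+y)⁻ - (f x⁻ + f y⁻) := by
        rw [← happ]; abel
      rw [h3]; abel
    exact goal'
  map_smul' t v := by
    simp only [RingHom.id_apply]
    rcases le_or_gt 0 t with ht | ht
    · rw [vl_smul_posPart ht, vl_smul_negPart ht, hsmul t _ ht (posPart_nonneg v),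
        hsmul t _ ht (negPart_nonneg v), ← smul_sub]
    · have hs : 0 ≤ -t := by linarith
      have e1 : (t • v)⁺ = (-t) • v⁻ := by
        rw [← vl_smul_negPart hs, ← posPart_neg, neg_smul, neg_neg]
      have e2 : (t • v)⁻ = (-t) • v⁺ := by
        rw [← vl_smul_posPart hs, neg_smul]
        rw [← posPart_neg]
      rw [e1, e2, hsmul _ _ hs (negPart_nonneg v), hsmul _ _ hs (posPart_nonneg v)]
      rw [show t • (f v⁺ - f v⁻) = -((-t) • (f v⁺ - f v⁻)) by rw [neg_smul, neg_neg]]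
      rw [smul_sub]
      abel

variable {f}
variable {hadd : ∀ x y : E, 0 ≤ x → 0 ≤ y → f (x + y) = f x + f y}
variable {hsmul : ∀ (t : ℝ) (x : E), 0 ≤ t → 0 ≤ x → f (t • x) = t • f x}

lemma extMap_apply {x : E} (hx : 0 ≤ x) : extMap f hadd hsmul x = f x := by
  have hz : f 0 = 0 := by
    have := hadd 0 0 le_rfl le_rfl
    rw [add_zero] at this
    have h2 := congrArg (· - f 0) this
    simpa using h2.symm
  show f x⁺ - f x⁻ = f x
  rw [posPart_eq_self.2 hx, negPart_eq_zero.2 hx, hz, sub_zero]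

lemma extMap_mono (hmono : ∀ x y : E, 0 ≤ x → x ≤ y → f x ≤ f y) {v w : E} (hvw : v ≤ w) :
    extMap f hadd hsmul v ≤ extMap f hadd hsmul w := by
  have h0 : ∀ x : E, 0 ≤ x → 0 ≤ extMap f hadd hsmul x := by
    intro x hx
    rw [extMap_apply hx]
    have := hmono 0 x le_rfl hx
    have hz : f 0 = 0 := by
      have h1 := hadd 0 0 le_rfl le_rfl
      rw [add_zero] at h1
      have h2 := congrArg (· - f 0) h1
      simpa using h2.symm
    rwa [hz] at this
  have := h0 (w - v) (sub_nonneg.2 hvw)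
  rw [map_sub] at this
  exact sub_nonneg.1 this

lemma extMap_orderBounded (hmono : ∀ x y : E, 0 ≤ x → x ≤ y → f x ≤ f y) :
    IsOrderBoundedOp E (extMap f hadd hsmul) := by
  intro a b
  refine ⟨-(f (|a| + |b|)), f (|a| + |b|), fun x hax hxb => ?_⟩
  have hfpos : ∀ y : E, 0 ≤ y → 0 ≤ f y := by
    intro y hy
    have := hmono 0 y le_rfl hy
    have hz : f 0 = 0 := by
      have h1 := hadd 0 0 le_rfl le_rfl
      rw [add_zero] at h1
      have h2 := congrArg (· - f 0) h1
      simpa using h2.symm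
    rwa [hz] at this
  have habs : |x| ≤ |a| + |b| := by
    have h1 : x ≤ |a| + |b| :=
      hxb.trans ((le_abs_self b).trans (le_add_of_nonneg_left (abs_nonneg a)))
    have h2 : -x ≤ |a| + |b| :=
      (neg_le_neg_iff.2 hax).trans ((neg_le_abs a).trans (le_add_of_nonneg_right (abs_nonneg b)))
    rw [abs]; exact sup_le h1 h2
  have hp : f x⁺ ≤ f (|a| + |b|) :=
    hmono _ _ (posPart_nonneg x) ((vl_posPart_le_abs x).trans habs)
  have hn : f x⁻ ≤ f (|a| + |b|) :=
    hmono _ _ (negPart_nonneg x) ((vl_negPart_le_abs x).trans habs)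
  constructor
  · show -(f (|a|+|b|)) ≤ f x⁺ - f x⁻
    have hpp := hfpos x⁺ (posPart_nonneg x)
    calc -(f (|a|+|b|)) ≤ -(f x⁻) := neg_le_neg_iff.2 hn
    _ ≤ f x⁺ - f x⁻ := by
        rw [sub_eq_add_neg]
        exact le_add_of_nonneg_left hpp
  · show f x⁺ - f x⁻ ≤ f (|a| + |b|)
    have hnn := hfpos x⁻ (negPart_nonneg x)
    calc f x⁺ - f x⁻ ≤ f x⁺ := by
          rw [sub_eq_add_neg]
          exact add_le_of_nonpos_right (neg_nonpos.2 hnn)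
    _ ≤ _ := hp

lemma extMap_bandPreserving (hpos : ∀ x : E, 0 ≤ x → 0 ≤ f x)
    (hdisj : ∀ (x w : E), 0 ≤ x → x ⊓ |w| = 0 → f x ⊓ |w| = 0) :
    IsBandPreserving E (extMap f hadd hsmul) := by
  intro x w hxw
  have h1 : x⁺ ⊓ |w| = 0 := by
    refine le_antisymm ?_ (le_inf (posPart_nonneg x) (abs_nonneg w))
    calc x⁺ ⊓ |w| ≤ |x| ⊓ |w| := inf_le_inf_right _ (vl_posPart_le_abs x)
    _ = 0 := hxw
  have h2 : x⁻ ⊓ |w| = 0 := by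
    refine le_antisymm ?_ (le_inf (negPart_nonneg x) (abs_nonneg w))
    calc x⁻ ⊓ |w| ≤ |x| ⊓ |w| := inf_le_inf_right _ (vl_negPart_le_abs x)
    _ = 0 := hxw
  have hv : |extMap f hadd hsmul x| ≤ f x⁺ + f x⁻ := by
    show |f x⁺ - f x⁻| ≤ _
    calc |f x⁺ - f x⁻| ≤ |f x⁺| + |f x⁻| := vl_abs_sub _ _
    _ = f x⁺ + f x⁻ := by
        rw [abs_of_nonneg (hpos _ (posPart_nonneg x)), abs_of_nonneg (hpos _ (negPart_nonneg x))]
  exact vl_disj_of_le_add (abs_nonneg _) hv (hpos _ (posPart_nonneg x))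
    (hpos _ (negPart_nonneg x)) (abs_nonneg w)
    (hdisj _ w (posPart_nonneg x) h1) (hdisj _ w (negPart_nonneg x) h2)

end ExtMap

lemma ob_neg {C : E →ₗ[ℝ] E} (h : IsOrderBoundedOp E C) : IsOrderBoundedOp E (-C) := by
  intro a b
  obtain ⟨c, d, hcd⟩ := h a b
  refine ⟨-d, -c, fun x h1 h2 => ?_⟩
  have hx := hcd x h1 h2
  constructor
  · show -d ≤ (-C) x
    rw [LinearMap.neg_apply]
    exact neg_le_neg_iff.2 hx.2
  · show (-C) x ≤ -c
    rw [LinearMap.neg_apply]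
    exact neg_le_neg_iff.2 hx.1

lemma ob_sub {C D : E →ₗ[ℝ] E} (hC : IsOrderBoundedOp E C) (hD : IsOrderBoundedOp E D) :
    IsOrderBoundedOp E (C - D) := by
  intro a b
  obtain ⟨c1, d1, h1⟩ := hC a b
  obtain ⟨c2, d2, h2⟩ := hD a b
  refine ⟨c1 - d2, d1 - c2, fun x ha hb => ?_⟩
  constructor
  · show c1 - d2 ≤ C x - D x
    exact sub_le_sub (h1 x ha hb).1 (h2 x ha hb).2
  · show C x - D x ≤ d1 - c2
    exact sub_le_sub (h1 x ha hb).2 (h2 x ha hb).1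

lemma bp_neg {C : E →ₗ[ℝ] E} (h : IsBandPreserving E C) : IsBandPreserving E (-C) := by
  intro x y hxy
  have := h x y hxy
  simpa using this

lemma bp_sub {C D : E →ₗ[ℝ] E} (hC : IsBandPreserving E C) (hD : IsBandPreserving E D) :
    IsBandPreserving E (C - D) := by
  intro x y hxy
  have h1 := hC x y hxy
  have h2 := hD x y hxy
  have hle : |(C - D) x| ≤ |C x| + |D x| := by
    show |C x - D x| ≤ _
    exact vl_abs_sub _ _
  exact vl_disj_of_le_add (abs_nonneg _) hle (abs_nonneg _) (abs_nonneg _) (abs_nonneg _) h1 h2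

lemma bp_pair_disj {C : E →ₗ[ℝ] E} (h : IsBandPreserving E C) {x y : E}
    (hxy : |x| ⊓ |y| = 0) : |C x| ⊓ |C y| = 0 := by
  have h1 := h x y hxy
  have h2 := h y (C x) (by rw [inf_comm]; exact h1)
  rw [inf_comm] at h2
  exact h2

variable {E : Type*} [AddCommGroup E] [ConditionallyCompleteLattice E] [Module ℝ E]
  [CovariantClass E E (· + ·) (· ≤ ·)] [PosSMulMono ℝ E]

/-- The component of `x` in the band generated by `a` (for `0 ≤ a`, `0 ≤ x`). -/
noncomputable def pj (a x : E) : E := ⨆ n : ℕ, x ⊓ n • a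

lemma pjBdd (a x : E) : BddAbove (Set.range fun n : ℕ => x ⊓ n • a) :=
  ⟨x, by rintro _ ⟨n, rfl⟩; exact inf_le_left⟩

lemma pj_le_self (a x : E) : pj a x ≤ x := ciSup_le fun n => inf_le_left

lemma pj_nonneg {a x : E} (ha : 0 ≤ a) (hx : 0 ≤ x) : 0 ≤ pj a x := by
  have h := le_ciSup (pjBdd a x) 0
  rwa [zero_nsmul, inf_eq_right.2 hx] at h

lemma pj_mono {a x y : E} (hxy : x ≤ y) : pj a x ≤ pj a y :=
  ciSup_le fun n => (inf_le_inf_right _ hxy).trans (le_ciSup (pjBdd a y) n)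

lemma pj_mono_a {a b x : E} (hba : b ≤ a) : pj b x ≤ pj a x :=
  ciSup_le fun n => (inf_le_inf_left x (nsmul_le_nsmul_right hba n)).trans (le_ciSup (pjBdd a x) n)

lemma pj_add {a x y : E} (ha : 0 ≤ a) (hx : 0 ≤ x) (hy : 0 ≤ y) :
    pj a (x + y) = pj a x + pj a y := by
  refine le_antisymm ?_ ?_
  · refine ciSup_le fun n => ?_
    calc (x + y) ⊓ n • a ≤ x ⊓ n • a + y ⊓ n • a :=
          vl_inf_add_le hx hy (nsmul_nonneg ha n)
    _ ≤ pj a x + pj a y := add_le_add (le_ciSup (pjBdd a x) n) (le_ciSup (pjBdd a y) n)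
  · have key : ∀ n m : ℕ, x ⊓ n • a + y ⊓ m • a ≤ pj a (x + y) := by
      intro n m
      have h1 : x ⊓ n • a + y ⊓ m • a ≤ (x + y) ⊓ ((n + m) • a) := by
        refine le_inf (add_le_add inf_le_left inf_le_left) ?_
        rw [add_nsmul]
        exact add_le_add inf_le_right inf_le_right
      exact h1.trans (le_ciSup (pjBdd a (x+y)) (n+m))
    have h3 : ∀ m : ℕ, y ⊓ m • a ≤ pj a (x + y) - pj a x := by
      intro m
      have h2 : pj a x ≤ pj a (x + y) - y ⊓ m • a :=
        ciSup_le fun n => le_sub_iff_add_le.2 (key n m)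
      have h2' : pj a x + y ⊓ m • a ≤ pj a (x + y) := le_sub_iff_add_le.1 h2
      rw [le_sub_iff_add_le, add_comm]
      exact h2'
    have h4 : pj a y ≤ pj a (x + y) - pj a x := ciSup_le h3
    rw [add_comm (pj a x) (pj a y)]
    exact le_sub_iff_add_le.1 h4

lemma pj_smul_aux {a x : E} (ha : 0 ≤ a) {t : ℝ} (ht : 0 < t) :
    t • pj a x ≤ pj a (t • x) := by
  have key : ∀ n : ℕ, t • (x ⊓ n • a) ≤ pj a (t • x) := by
    intro n
    have e1 : t • (x ⊓ n • a) = (t • x) ⊓ ((t * n) • a) := by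
      rw [vl_smul_inf ht.le, ← Nat.cast_smul_eq_nsmul ℝ n a, smul_smul]
    set m := ⌈t * n⌉₊ with hm
    have h2 : (t * n : ℝ) • a ≤ (m:ℝ) • a := vl_smul_mono_right (Nat.le_ceil _) ha
    rw [Nat.cast_smul_eq_nsmul] at h2
    rw [e1]
    exact (inf_le_inf_left _ h2).trans (le_ciSup (pjBdd a (t • x)) m)
  have h3 : pj a x ≤ t⁻¹ • pj a (t • x) := by
    refine ciSup_le fun n => ?_
    have := smul_le_smul_of_nonneg_left (key n) (by positivity : (0:ℝ) ≤ t⁻¹)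
    rwa [inv_smul_smul₀ ht.ne'] at this
  have h4 := smul_le_smul_of_nonneg_left h3 ht.le
  rwa [smul_inv_smul₀ ht.ne'] at h4

lemma pj_zero_right {a : E} (ha : 0 ≤ a) : pj a 0 = 0 := by
  have : ∀ n : ℕ, (0:E) ⊓ n • a = 0 := fun n => inf_eq_left.2 (nsmul_nonneg ha n)
  rw [pj]
  simp only [this, ciSup_const]

lemma pj_smul {a x : E} (ha : 0 ≤ a) {t : ℝ} (ht : 0 ≤ t) :
    pj a (t • x) = t • pj a x := by
  rcases eq_or_lt_of_le ht with h | h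
  · rw [← h, zero_smul, zero_smul, pj_zero_right ha]
  · refine le_antisymm ?_ (pj_smul_aux ha h)
    have := pj_smul_aux ha (by positivity : (0:ℝ) < t⁻¹) (x := t • x)
    rw [inv_smul_smul₀ h.ne'] at this
    have h4 := smul_le_smul_of_nonneg_left this h.le
    rwa [smul_inv_smul₀ h.ne'] at h4

lemma pj_of_le {a b : E} (hba : b ≤ a) : pj a b = b := by
  refine le_antisymm (pj_le_self a b) ?_
  have h := le_ciSup (pjBdd a b) 1
  rwa [one_nsmul, inf_eq_left.2 hba] at h

lemma pj_self {a : E} : pj a a = a := pj_of_le le_rfl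

lemma pj_disj {a x : E} (hx : 0 ≤ x) (ha : 0 ≤ a) (h : x ⊓ a = 0) : pj a x = 0 := by
  have hterm : ∀ n : ℕ, x ⊓ n • a = 0 := vl_inf_nsmul_zero hx ha h
  rw [pj]
  simp only [hterm, ciSup_const]

lemma pj_disj2 {a b x : E} (ha : 0 ≤ a) (hx : 0 ≤ x) (hb : 0 ≤ b) (h : b ⊓ a = 0) :
    b ⊓ pj a x = 0 := by
  refine le_antisymm ?_ (le_inf hb (pj_nonneg ha hx))
  refine vl_inf_ciSup_le (pjBdd a x) fun n => ?_
  calc b ⊓ (x ⊓ n • a) ≤ b ⊓ n • a := inf_le_inf_left b inf_le_right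
  _ = 0 := vl_inf_nsmul_zero hb ha h n

lemma pj_res {a x : E} (ha : 0 ≤ a) (hx : 0 ≤ x) : (x - pj a x) ⊓ a = 0 := by
  set d := (x - pj a x) ⊓ a with hd
  have hd0 : 0 ≤ d := le_inf (sub_nonneg.2 (pj_le_self a x)) ha
  have hrec : ∀ n : ℕ, x ⊓ n • a + d ≤ x ⊓ (n + 1) • a := by
    intro n
    refine le_inf ?_ ?_
    · calc x ⊓ n • a + d ≤ pj a x + (x - pj a x) :=
            add_le_add (le_ciSup (pjBdd a x) n) inf_le_left
      _ = x := by abel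
    · rw [succ_nsmul]
      exact add_le_add inf_le_right inf_le_right
  have hclaim : ∀ n : ℕ, n • d ≤ x ⊓ n • a := by
    intro n
    induction n with
    | zero => rw [zero_nsmul, zero_nsmul, inf_eq_right.2 hx]
    | succ n ih =>
      rw [succ_nsmul]
      exact (add_le_add_left ih d).trans (hrec n)
  have harch : ∀ n : ℕ, n • d ≤ x := fun n => (hclaim n).trans inf_le_left
  have := vl_arch hd0 harch
  exact le_antisymm this hd0

/-- The band projection onto the band generated by `a ≥ 0`, as a linear map. -/
noncomputable def Pj (a : E) (ha : 0 ≤ a) : E →ₗ[ℝ] E :=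
  extMap (pj a) (fun x y hx hy => pj_add ha hx hy) (fun t x ht hx => pj_smul ha ht)

lemma Pj_eval {a : E} (ha : 0 ≤ a) (v : E) : Pj a ha v = pj a v⁺ - pj a v⁻ := rfl

lemma Pj_apply {a : E} (ha : 0 ≤ a) {x : E} (hx : 0 ≤ x) : Pj a ha x = pj a x :=
  extMap_apply hx

lemma Pj_mono {a : E} (ha : 0 ≤ a) {v w : E} (hvw : v ≤ w) : Pj a ha v ≤ Pj a ha w :=
  extMap_mono (fun x y hx hxy => pj_mono hxy) hvw

lemma Pj_pos {a : E} (ha : 0 ≤ a) {x : E} (hx : 0 ≤ x) : 0 ≤ Pj a ha x := by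
  rw [Pj_apply ha hx]; exact pj_nonneg ha hx

lemma Pj_kills {a : E} (ha : 0 ≤ a) {w : E} (hw : |w| ⊓ a = 0) : Pj a ha w = 0 := by
  rw [Pj_eval]
  have h1 : w⁺ ⊓ a = 0 := by
    refine le_antisymm ?_ (le_inf (posPart_nonneg w) ha)
    calc w⁺ ⊓ a ≤ |w| ⊓ a := inf_le_inf_right a (vl_posPart_le_abs w)
    _ = 0 := hw
  have h2 : w⁻ ⊓ a = 0 := by
    refine le_antisymm ?_ (le_inf (negPart_nonneg w) ha)
    calc w⁻ ⊓ a ≤ |w| ⊓ a := inf_le_inf_right a (vl_negPart_le_abs w)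
    _ = 0 := hw
  rw [pj_disj (posPart_nonneg w) ha h1, pj_disj (negPart_nonneg w) ha h2, sub_zero]

lemma Pj_member {a : E} (ha : 0 ≤ a) {w : E}
    (h : ∀ w' : E, |w'| ⊓ a = 0 → |w| ⊓ |w'| = 0) : Pj a ha w = w := by
  have key : ∀ u : E, 0 ≤ u → u ≤ |w| → pj a u = u := by
    intro u hu hule
    set r := u - pj a u with hr
    have hr0 : 0 ≤ r := sub_nonneg.2 (pj_le_self a u)
    have hra : r ⊓ a = 0 := pj_res ha hu
    have hw' : |w| ⊓ |r| = 0 := h r (by rwa [abs_of_nonneg hr0])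
    have hrw : r ≤ |w| := le_trans (sub_le_self u (pj_nonneg ha hu)) hule
    have hr_eq : r = 0 := by
      have h1 : r ⊓ |w| = r := inf_eq_left.2 hrw
      rw [inf_comm] at h1
      rw [abs_of_nonneg hr0] at hw'
      rw [hw'] at h1
      exact h1.symm
    rw [hr] at hr_eq
    exact (sub_eq_zero.1 hr_eq).symm
  rw [Pj_eval]
  rw [key w⁺ (posPart_nonneg w) (vl_posPart_le_abs w),
    key w⁻ (negPart_nonneg w) (vl_negPart_le_abs w), posPart_sub_negPart]

lemma Pj_disjpres {a : E} (ha : 0 ≤ a) {w : E} (hw : |w| ⊓ a = 0) (v : E) :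
    |Pj a ha v| ⊓ |w| = 0 := by
  have hle : |Pj a ha v| ≤ pj a v⁺ + pj a v⁻ := by
    rw [Pj_eval]
    calc |pj a v⁺ - pj a v⁻| ≤ |pj a v⁺| + |pj a v⁻| := vl_abs_sub _ _
    _ = pj a v⁺ + pj a v⁻ := by
        rw [abs_of_nonneg (pj_nonneg ha (posPart_nonneg v)),
          abs_of_nonneg (pj_nonneg ha (negPart_nonneg v))]
  have h1 : pj a v⁺ ⊓ |w| = 0 := by
    rw [inf_comm]; exact pj_disj2 ha (posPart_nonneg v) (abs_nonneg w) hw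
  have h2 : pj a v⁻ ⊓ |w| = 0 := by
    rw [inf_comm]; exact pj_disj2 ha (negPart_nonneg v) (abs_nonneg w) hw
  exact vl_disj_of_le_add (abs_nonneg _) hle (pj_nonneg ha (posPart_nonneg v))
    (pj_nonneg ha (negPart_nonneg v)) (abs_nonneg w) h1 h2

lemma Pj_comm {a : E} (ha : 0 ≤ a) {C : E →ₗ[ℝ] E} (hbp : IsBandPreserving E C) (v : E) :
    Pj a ha (C v) = C (Pj a ha v) := by
  have hrdisj : |v - Pj a ha v| ⊓ a = 0 := by
    have hrepr : v - Pj a ha v = (v⁺ - pj a v⁺) - (v⁻ - pj a v⁻) := by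
      rw [Pj_eval]
      have := posPart_sub_negPart v
      calc v - (pj a v⁺ - pj a v⁻) = (v⁺ - v⁻) - (pj a v⁺ - pj a v⁻) := by rw [this]
      _ = (v⁺ - pj a v⁺) - (v⁻ - pj a v⁻) := by abel
    have h1 : 0 ≤ v⁺ - pj a v⁺ := sub_nonneg.2 (pj_le_self _ _)
    have h2 : 0 ≤ v⁻ - pj a v⁻ := sub_nonneg.2 (pj_le_self _ _)
    have hle : |v - Pj a ha v| ≤ (v⁺ - pj a v⁺) + (v⁻ - pj a v⁻) := by
      rw [hrepr]
      calc |(v⁺ - pj a v⁺) - (v⁻ - pj a v⁻)| ≤ |v⁺ - pj a v⁺| + |v⁻ - pj a v⁻| := vl_abs_sub _ _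
      _ = _ := by rw [abs_of_nonneg h1, abs_of_nonneg h2]
    exact vl_disj_of_le_add (abs_nonneg _) hle h1 h2 ha (pj_res ha (posPart_nonneg v))
      (pj_res ha (negPart_nonneg v))
  have h2 : |C (v - Pj a ha v)| ⊓ a = 0 := by
    have := hbp (v - Pj a ha v) a (by rwa [abs_of_nonneg ha])
    rwa [abs_of_nonneg ha] at this
  have h3 : Pj a ha (C (v - Pj a ha v)) = 0 := Pj_kills ha h2
  have h4 : Pj a ha (C (Pj a ha v)) = C (Pj a ha v) :=
    Pj_member ha (fun w' hw' => hbp (Pj a ha v) w' (Pj_disjpres ha hw' v))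
  have h5 : C v = C (Pj a ha v) + C (v - Pj a ha v) := by
    rw [← map_add]; congr 1; abel
  rw [h5, map_add, h3, h4, add_zero]

lemma Pj_nested {a b : E} (ha : 0 ≤ a) (hb : 0 ≤ b) (hba : b ≤ a) (v : E) :
    Pj a ha (Pj b hb v) = Pj b hb v := by
  refine Pj_member ha (fun w' hw' => ?_)
  have hwb : |w'| ⊓ b = 0 := by
    refine le_antisymm ?_ (le_inf (abs_nonneg w') hb)
    calc |w'| ⊓ b ≤ |w'| ⊓ a := inf_le_inf_left _ hba
    _ = 0 := hw'
  have := Pj_disjpres hb hwb v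
  rw [inf_comm] at this
  rwa [inf_comm]

lemma pj_comp {a b w : E} (ha : 0 ≤ a) (hb : 0 ≤ b) (hba : b ≤ a) (hw : 0 ≤ w) :
    pj b w = pj b (pj a w) := by
  have h1 : Pj b hb w - Pj b hb (pj a w) = Pj b hb (w - pj a w) := by rw [map_sub]
  have h2 : |w - pj a w| ⊓ b = 0 := by
    have hr0 : 0 ≤ w - pj a w := sub_nonneg.2 (pj_le_self a w)
    rw [abs_of_nonneg hr0]
    refine le_antisymm ?_ (le_inf hr0 hb)
    calc (w - pj a w) ⊓ b ≤ (w - pj a w) ⊓ a := inf_le_inf_left _ hba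
    _ = 0 := pj_res ha hw
  rw [Pj_kills hb h2] at h1
  have h3 := sub_eq_zero.1 h1
  rw [Pj_apply hb hw, Pj_apply hb (pj_nonneg ha hw)] at h3
  exact h3

variable {E : Type*} [AddCommGroup E] [ConditionallyCompleteLattice E] [Module ℝ E]
  [CovariantClass E E (· + ·) (· ≤ ·)] [PosSMulMono ℝ E]

lemma ob_bound {C : E →ₗ[ℝ] E} (hob : IsOrderBoundedOp E C) {y : E} (hy : 0 ≤ y) :
    ∃ d : E, 0 ≤ d ∧ ∀ x : E, 0 ≤ x → x ≤ y → C x ≤ d := by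
  obtain ⟨c, d, h⟩ := hob 0 y
  refine ⟨d, ?_, fun x hx hxy => (h x hx hxy).2⟩
  have h0 := (h 0 le_rfl hy).2
  rwa [map_zero] at h0

lemma starA {C : E →ₗ[ℝ] E} (hob : IsOrderBoundedOp E C) (hbp : IsBandPreserving E C)
    {y z : E} (hy : 0 ≤ y) (hz : 0 ≤ z) :
    ∃ d : E, 0 ≤ d ∧ ∀ t : ℝ, 0 ≤ t →
      (1 + t) • pj ((y - t • z)⁺) ((C y)⁺ ⊓ (C z)⁻) ≤ d := by
  obtain ⟨d, hd0, hdb⟩ := ob_bound hob hy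
  refine ⟨d, hd0, fun t ht => ?_⟩
  set u := (C y)⁺ ⊓ (C z)⁻ with hu
  set e := (y - t • z)⁺ with he
  set f := (y - t • z)⁻ with hf
  have hu0 : 0 ≤ u := le_inf (posPart_nonneg _) (negPart_nonneg _)
  have he0 : 0 ≤ e := posPart_nonneg _
  have hf0 : 0 ≤ f := negPart_nonneg _
  have hkey : (1 + t) • u ≤ (C y - t • C z)⁺ := vl_key hu0 inf_le_left inf_le_right ht
  have heq : C y - t • C z = C e - C f := by
    rw [← map_smul, ← map_sub, ← posPart_sub_negPart (y - t • z), map_sub]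
  have hef : e ⊓ f = 0 := posPart_inf_negPart_eq_zero _
  have hefabs : |e| ⊓ |f| = 0 := by rwa [abs_of_nonneg he0, abs_of_nonneg hf0]
  have hsplit : (C e - C f)⁺ = (C e)⁺ + (C f)⁻ := by
    have h1 : |C e| ⊓ |(-(C f))| = 0 := by rw [abs_neg]; exact bp_pair_disj hbp hefabs
    have h2 := vl_posPart_add_of_disjoint h1
    rw [posPart_neg] at h2
    rw [sub_eq_add_neg]
    exact h2
  rw [heq, hsplit] at hkey
  have hmono := pj_mono (a := e) hkey
  rw [pj_smul he0 (by linarith : (0:ℝ) ≤ 1 + t)] at hmono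
  have hadd : pj e ((C e)⁺ + (C f)⁻) = pj e ((C e)⁺) + pj e ((C f)⁻) :=
    pj_add he0 (posPart_nonneg _) (negPart_nonneg _)
  have hzero : pj e ((C f)⁻) = 0 := by
    refine pj_disj (negPart_nonneg _) he0 ?_
    have h1 : |C f| ⊓ |e| = 0 := hbp f e (by rwa [inf_comm] at hefabs)
    rw [abs_of_nonneg he0] at h1
    refine le_antisymm ?_ (le_inf (negPart_nonneg _) he0)
    calc (C f)⁻ ⊓ e ≤ |C f| ⊓ e := inf_le_inf_right e (vl_negPart_le_abs _)
    _ = 0 := h1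
  have hle_e : e ≤ y := by
    calc e = (y - t • z)⁺ := he
    _ ≤ y⁺ := posPart_mono (sub_le_self y (smul_nonneg ht hz))
    _ = y := posPart_eq_self.2 hy
  have hCed : (C e)⁺ ≤ d := by
    rw [posPart_def]
    exact sup_le (hdb e he0 hle_e) hd0
  calc (1 + t) • pj e u ≤ pj e ((C e)⁺) + pj e ((C f)⁻) := by rw [← hadd]; exact hmono
  _ = pj e ((C e)⁺) := by rw [hzero, add_zero]
  _ ≤ (C e)⁺ := pj_le_self _ _
  _ ≤ d := hCed

lemma grid_step {C : E →ₗ[ℝ] E} (hbp : IsBandPreserving E C)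
    {yh zh w d : E} (hz : 0 ≤ zh) (hw : 0 ≤ w)
    (h1 : w ≤ C yh) (h2 : C zh ≤ -w) {c ε : ℝ} (hc : 0 ≤ c) (hε : 0 ≤ ε)
    (hsmall : ∀ x : E, 0 ≤ x → x ≤ ε • zh → C x ≤ ε • d) :
    pj ((yh - c • zh)⁺) w - pj ((yh - (c + ε) • zh)⁺) w ≤ ε • d := by
  set A := (yh - c • zh)⁺ with hA
  set B := (yh - (c + ε) • zh)⁺ with hB
  have hA0 : 0 ≤ A := posPart_nonneg _
  have hB0 : 0 ≤ B := posPart_nonneg _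
  have hBA : B ≤ A :=
    posPart_mono (sub_le_sub_left (vl_smul_mono_right (by linarith) hz) yh)
  have hPi_pos : ∀ x : E, 0 ≤ x → 0 ≤ Pj A hA0 x - Pj B hB0 x := by
    intro x hx
    rw [Pj_apply hA0 hx, Pj_apply hB0 hx]
    exact sub_nonneg.2 (pj_mono_a hBA)
  have hPi_mono : ∀ v₁ v₂ : E, v₁ ≤ v₂ →
      Pj A hA0 v₁ - Pj B hB0 v₁ ≤ Pj A hA0 v₂ - Pj B hB0 v₂ := by
    intro v₁ v₂ h
    have hd := hPi_pos (v₂ - v₁) (sub_nonneg.2 h)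
    rw [map_sub, map_sub] at hd
    have h' : 0 ≤ (Pj A hA0 v₂ - Pj B hB0 v₂) - (Pj A hA0 v₁ - Pj B hB0 v₁) := by
      calc (0:E) ≤ Pj A hA0 v₂ - Pj A hA0 v₁ - (Pj B hB0 v₂ - Pj B hB0 v₁) := hd
      _ = (Pj A hA0 v₂ - Pj B hB0 v₂) - (Pj A hA0 v₁ - Pj B hB0 v₁) := by abel
    exact sub_nonneg.1 h'
  have hvalA : Pj A hA0 (yh - c • zh) = A := by
    rw [Pj_eval]
    have hneg : (yh - c • zh)⁻ ⊓ A = 0 := by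
      rw [hA, inf_comm]; exact posPart_inf_negPart_eq_zero _
    rw [show (yh - c • zh)⁺ = A from rfl, pj_self,
      pj_disj (negPart_nonneg _) hA0 hneg, sub_zero]
  have hvalBA : Pj B hB0 (yh - c • zh) ≤ A := by
    calc Pj B hB0 (yh - c • zh) ≤ Pj B hB0 ((yh - c • zh)⁺) := Pj_mono hB0 (le_posPart _)
    _ = pj B A := by rw [show (yh - c • zh)⁺ = A from rfl, Pj_apply hB0 hA0]
    _ ≤ A := pj_le_self _ _
  have hvalB : Pj B hB0 (yh - (c + ε) • zh) = B := by
    rw [Pj_eval]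
    have hneg : (yh - (c + ε) • zh)⁻ ⊓ B = 0 := by
      rw [hB, inf_comm]; exact posPart_inf_negPart_eq_zero _
    rw [show (yh - (c + ε) • zh)⁺ = B from rfl, pj_self,
      pj_disj (negPart_nonneg _) hB0 hneg, sub_zero]
  have hvalAB : Pj A hA0 (yh - (c + ε) • zh) ≤ B := by
    calc Pj A hA0 (yh - (c + ε) • zh) ≤ Pj A hA0 ((yh - (c + ε) • zh)⁺) :=
          Pj_mono hA0 (le_posPart _)
    _ = pj A B := by rw [show (yh - (c + ε) • zh)⁺ = B from rfl, Pj_apply hA0 hB0]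
    _ = B := pj_of_le hBA
  set PAy := Pj A hA0 yh with hPAy
  set PBy := Pj B hB0 yh with hPBy
  set PAz := Pj A hA0 zh with hPAz
  set PBz := Pj B hB0 zh with hPBz
  set s := (PAy - PBy) - c • (PAz - PBz) with hs
  have hs_eq : s = Pj A hA0 (yh - c • zh) - Pj B hB0 (yh - c • zh) := by
    rw [hs, map_sub, map_sub, map_smul, map_smul, hPAy, hPBy, hPAz, hPBz, smul_sub]
    abel
  have hs0 : 0 ≤ s := by
    rw [hs_eq, hvalA]
    exact sub_nonneg.2 hvalBA
  have hs_upp : s - ε • (PAz - PBz) ≤ 0 := by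
    have heq2 : s - ε • (PAz - PBz) =
        Pj A hA0 (yh - (c + ε) • zh) - Pj B hB0 (yh - (c + ε) • zh) := by
      rw [hs, map_sub, map_sub, map_smul, map_smul, hPAy, hPBy, hPAz, hPBz]
      module
    rw [heq2, hvalB]
    exact sub_nonpos.2 hvalAB
  have hPz_le : PAz - PBz ≤ zh := by
    have hB1 : 0 ≤ PBz := by rw [hPBz]; exact Pj_pos hB0 hz
    calc PAz - PBz ≤ PAz := sub_le_self PAz hB1
    _ ≤ zh := by rw [hPAz, Pj_apply hA0 hz]; exact pj_le_self _ _
  have hsz : s ≤ ε • zh := by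
    have := sub_nonpos.1 hs_upp
    exact this.trans (smul_le_smul_of_nonneg_left hPz_le hε)
  have hCs : C s ≤ ε • d := hsmall s hs0 hsz
  have hcommA : Pj A hA0 (C yh) = C PAy := by rw [hPAy]; exact Pj_comm hA0 hbp yh
  have hcommB : Pj B hB0 (C yh) = C PBy := by rw [hPBy]; exact Pj_comm hB0 hbp yh
  have hcommAz : Pj A hA0 (C zh) = C PAz := by rw [hPAz]; exact Pj_comm hA0 hbp zh
  have hcommBz : Pj B hB0 (C zh) = C PBz := by rw [hPBz]; exact Pj_comm hB0 hbp zh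
  have hdecomp : Pj A hA0 (C yh) - Pj B hB0 (C yh) =
      C s + c • (Pj A hA0 (C zh) - Pj B hB0 (C zh)) := by
    rw [hcommA, hcommB, hcommAz, hcommBz, hs, map_sub, map_sub, map_smul]
    rw [map_sub]
    module
  set p := Pj A hA0 w - Pj B hB0 w with hp
  have hp0 : 0 ≤ p := hPi_pos w hw
  have hPiCz : Pj A hA0 (C zh) - Pj B hB0 (C zh) ≤ -p := by
    have hm := hPi_mono (C zh) (-w) h2
    rw [map_neg, map_neg] at hm
    calc Pj A hA0 (C zh) - Pj B hB0 (C zh) ≤ -Pj A hA0 w - -Pj B hB0 w := hm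
    _ = -p := by rw [hp]; abel
  have hwv : p ≤ Pj A hA0 (C yh) - Pj B hB0 (C yh) := by
    rw [hp]; exact hPi_mono w (C yh) h1
  have hfinal : p ≤ ε • d + c • (-p) := by
    calc p ≤ C s + c • (Pj A hA0 (C zh) - Pj B hB0 (C zh)) := hwv.trans_eq hdecomp
    _ ≤ ε • d + c • (-p) := add_le_add hCs (smul_le_smul_of_nonneg_left hPiCz hc)
  have h5 : p + c • p ≤ ε • d := by
    rw [smul_neg, ← sub_eq_add_neg] at hfinal
    exact le_sub_iff_add_le.1 hfinal
  have h6 : p ≤ ε • d :=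
    (le_add_of_nonneg_right (smul_nonneg hc hp0)).trans h5
  rw [hp, Pj_apply hA0 hw, Pj_apply hB0 hw] at h6
  exact h6

/-- Grid elements for the Archimedean argument. -/
noncomputable def gav (yh zh : E) (m : ℕ) (j : ℕ) : E := (yh - ((j:ℝ) * (m:ℝ)⁻¹) • zh)⁺

lemma gridzero {C : E →ₗ[ℝ] E} (hob : IsOrderBoundedOp E C) (hbp : IsBandPreserving E C)
    {w yh zh : E} (hw : 0 ≤ w) (hy : 0 ≤ yh) (hz : 0 ≤ zh) (N : ℕ)
    (hcomp : yh ≤ (N:ℝ) • zh) (h1 : w ≤ C yh) (h2 : C zh ≤ -w) : w ≤ 0 := by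
  obtain ⟨d, hd0, hdb⟩ := ob_bound hob hz
  have main : ∀ m : ℕ, 0 < m → w ≤ (m:ℝ)⁻¹ • d := by
    intro m hm
    have hmR : (0:ℝ) < m := Nat.cast_pos.2 hm
    have hsmall : ∀ x : E, 0 ≤ x → x ≤ (m:ℝ)⁻¹ • zh → C x ≤ (m:ℝ)⁻¹ • d := by
      intro x hx hxz
      have hmx : (m:ℝ) • x ≤ zh := by
        have := smul_le_smul_of_nonneg_left hxz (le_of_lt hmR)
        rwa [smul_inv_smul₀ hmR.ne'] at this
      have hC := hdb ((m:ℝ) • x) (smul_nonneg hmR.le hx) hmx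
      have := smul_le_smul_of_nonneg_left hC (by positivity : (0:ℝ) ≤ (m:ℝ)⁻¹)
      rwa [← map_smul, inv_smul_smul₀ hmR.ne'] at this
    have hanti : ∀ i j : ℕ, i ≤ j → gav yh zh m j ≤ gav yh zh m i := by
      intro i j hij
      simp only [gav]
      refine posPart_mono (sub_le_sub_left (vl_smul_mono_right ?_ hz) yh)
      exact mul_le_mul_of_nonneg_right (Nat.cast_le.2 hij) (by positivity)
    have hav0 : ∀ j : ℕ, 0 ≤ gav yh zh m j := fun j => posPart_nonneg _
    have hq_nonneg : ∀ j : ℕ, 0 ≤ pj (gav yh zh m j) w := fun j => pj_nonneg (hav0 j) hw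
    have hstep : ∀ j : ℕ, pj (gav yh zh m j) w - pj (gav yh zh m (j+1)) w ≤ (m:ℝ)⁻¹ • d := by
      intro j
      have hgs := grid_step hbp hz hw h1 h2
        (c := (j:ℝ) * (m:ℝ)⁻¹) (ε := (m:ℝ)⁻¹) (by positivity) (by positivity) hsmall
      have hsc : (j:ℝ) * (m:ℝ)⁻¹ + (m:ℝ)⁻¹ = ((j+1:ℕ):ℝ) * (m:ℝ)⁻¹ := by push_cast; ring
      rw [hsc] at hgs
      simp only [gav]
      exact hgs
    have hpos : ∀ j : ℕ, 0 ≤ pj (gav yh zh m j) w - pj (gav yh zh m (j+1)) w := by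
      intro j
      exact sub_nonneg.2 (pj_mono_a (hanti j (j+1) (Nat.le_succ j)))
    have hdisj : ∀ i j : ℕ, i < j →
        (pj (gav yh zh m i) w - pj (gav yh zh m (i+1)) w) ⊓
          (pj (gav yh zh m j) w - pj (gav yh zh m (j+1)) w) = 0 := by
      intro i j hij
      have hres : (pj (gav yh zh m i) w - pj (gav yh zh m (i+1)) w) ⊓ gav yh zh m (i+1) = 0 := by
        have hcomp' : pj (gav yh zh m (i+1)) w =
            pj (gav yh zh m (i+1)) (pj (gav yh zh m i) w) :=
          pj_comp (hav0 i) (hav0 (i+1)) (hanti i (i+1) (Nat.le_succ i)) hw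
        rw [hcomp']
        exact pj_res (hav0 (i+1)) (pj_nonneg (hav0 i) hw)
      have hj_le : gav yh zh m j ≤ gav yh zh m (i+1) := hanti (i+1) j hij
      have h_iw_aj : (pj (gav yh zh m i) w - pj (gav yh zh m (i+1)) w) ⊓ gav yh zh m j = 0 := by
        refine le_antisymm ?_ (le_inf (hpos i) (hav0 j))
        calc (pj (gav yh zh m i) w - pj (gav yh zh m (i+1)) w) ⊓ gav yh zh m j ≤
            (pj (gav yh zh m i) w - pj (gav yh zh m (i+1)) w) ⊓ gav yh zh m (i+1) :=
              inf_le_inf_left _ hj_le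
        _ = 0 := hres
      have h_ipj : (pj (gav yh zh m i) w - pj (gav yh zh m (i+1)) w) ⊓ pj (gav yh zh m j) w = 0 :=
        pj_disj2 (hav0 j) hw (hpos i) h_iw_aj
      refine le_antisymm ?_ (le_inf (hpos i) (hpos j))
      calc (pj (gav yh zh m i) w - pj (gav yh zh m (i+1)) w) ⊓
          (pj (gav yh zh m j) w - pj (gav yh zh m (j+1)) w) ≤
          (pj (gav yh zh m i) w - pj (gav yh zh m (i+1)) w) ⊓ pj (gav yh zh m j) w :=
            inf_le_inf_left _ (sub_le_self _ (hq_nonneg (j+1)))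
      _ = 0 := h_ipj
    have htel : (Finset.range (N * m + 1)).sum
        (fun j => pj (gav yh zh m j) w - pj (gav yh zh m (j+1)) w) =
        pj (gav yh zh m 0) w - pj (gav yh zh m (N * m + 1)) w :=
      Finset.sum_range_sub' (fun j => pj (gav yh zh m j) w) (N * m + 1)
    have hq0 : pj (gav yh zh m 0) w = w := by
      have hav0eq : gav yh zh m 0 = yh := by
        simp only [gav]
        norm_num
        exact hy
      rw [hav0eq]
      have hmem := Pj_member hy (w := w) ?_
      · rw [Pj_apply hy hw] at hmem; exact hmem
      · intro w' hw'
        have hby : |yh| ⊓ |w'| = 0 := by rw [abs_of_nonneg hy, inf_comm]; exact hw'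
        have hCw := hbp yh w' hby
        have hwle : w ≤ |C yh| := h1.trans (le_abs_self _)
        rw [abs_of_nonneg hw]
        refine le_antisymm ?_ (le_inf hw (abs_nonneg w'))
        calc w ⊓ |w'| ≤ |C yh| ⊓ |w'| := inf_le_inf_right _ hwle
        _ = 0 := hCw
    have hqJ : pj (gav yh zh m (N * m + 1)) w = 0 := by
      have havJ : gav yh zh m (N * m + 1) = 0 := by
        simp only [gav]
        refine posPart_eq_zero.2 (sub_nonpos.2 ?_)
        refine hcomp.trans (vl_smul_mono_right ?_ hz)
        push_cast
        rw [add_mul, mul_assoc, mul_inv_cancel₀ hmR.ne', mul_one]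
        have h01 : (0:ℝ) ≤ 1 * (m:ℝ)⁻¹ := by positivity
        linarith
      rw [havJ]
      have hterm : ∀ n : ℕ, w ⊓ n • (0:E) = 0 := by
        intro n; rw [smul_zero]; exact inf_eq_right.2 hw
      rw [pj]
      simp only [hterm, ciSup_const]
    have hsum := vl_sum_disjoint (t := (m:ℝ)⁻¹ • d)
      (smul_nonneg (by positivity) hd0)
      (fun i _ => hpos i) (fun i j hij _ => hdisj i j hij) (fun i _ => hstep i)
      (k := N * m + 1)
    rw [htel, hq0, hqJ, sub_zero] at hsum
    exact hsum
  have harch : ∀ n : ℕ, n • w ≤ d := by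
    intro n
    cases n with
    | zero => rw [zero_nsmul]; exact hd0
    | succ k =>
      have h := main (k+1) (Nat.succ_pos k)
      have hpos' : (0:ℝ) < ((k+1:ℕ):ℝ) := by positivity
      have h2' := smul_le_smul_of_nonneg_left h hpos'.le
      rw [smul_inv_smul₀ hpos'.ne'] at h2'
      rwa [Nat.cast_smul_eq_nsmul] at h2'
  exact vl_arch hw harch

/-- The fundamental sign-uniformity property of band preserving order bounded operators. -/
theorem star_disj {C : E →ₗ[ℝ] E} (hob : IsOrderBoundedOp E C) (hbp : IsBandPreserving E C)
    {y z : E} (hy : 0 ≤ y) (hz : 0 ≤ z) : (C y)⁺ ⊓ (C z)⁻ = 0 := by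
  set u := (C y)⁺ ⊓ (C z)⁻ with hu
  have hu0 : 0 ≤ u := le_inf (posPart_nonneg _) (negPart_nonneg _)
  obtain ⟨dy, hdy0, HY⟩ := starA hob hbp hy hz
  obtain ⟨dz, hdz0, HZ⟩ := starA (ob_neg hob) (bp_neg hbp) hz hy
  have hu' : ((-C) z)⁺ ⊓ ((-C) y)⁻ = u := by
    rw [hu, LinearMap.neg_apply, LinearMap.neg_apply, posPart_neg, negPart_neg, inf_comm]
  have key : ∀ n : ℕ, (1 + (n:ℝ)) • u ≤ dy + dz := by
    intro n
    set e := (y - (n:ℝ) • z)⁺ with he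
    set e' := (z - (n:ℝ) • y)⁺ with he'
    set v := u - pj e u with hv
    set w := v - pj e' v with hw
    have he0 : 0 ≤ e := posPart_nonneg _
    have he'0 : 0 ≤ e' := posPart_nonneg _
    have hv0 : 0 ≤ v := sub_nonneg.2 (pj_le_self _ _)
    have hw0 : 0 ≤ w := sub_nonneg.2 (pj_le_self _ _)
    have hvu : v ≤ u := sub_le_self _ (pj_nonneg he0 hu0)
    have hwv : w ≤ v := sub_le_self _ (pj_nonneg he'0 hv0)
    have hwzero : w = 0 := by
      have hwCy : w ≤ (C y)⁺ := (hwv.trans hvu).trans inf_le_left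
      have hwCz : w ≤ (C z)⁻ := (hwv.trans hvu).trans inf_le_right
      have hWy0 : 0 ≤ pj w y := pj_nonneg hw0 hy
      have hWz0 : 0 ≤ pj w z := pj_nonneg hw0 hz
      have hq1 : w ≤ C (pj w y) := by
        have hCWy : Pj w hw0 (C y) = C (pj w y) := by
          rw [Pj_comm hw0 hbp y, Pj_apply hw0 hy]
        rw [← hCWy, Pj_eval]
        have hA : w ≤ pj w ((C y)⁺) := by
          have hh := pj_mono (a := w) hwCy
          rwa [pj_self] at hh
        have hB : pj w ((C y)⁻) = 0 := by
          refine pj_disj (negPart_nonneg _) hw0 ?_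
          refine le_antisymm ?_ (le_inf (negPart_nonneg _) hw0)
          calc (C y)⁻ ⊓ w ≤ (C y)⁻ ⊓ (C y)⁺ := inf_le_inf_left _ hwCy
          _ = 0 := by rw [inf_comm]; exact posPart_inf_negPart_eq_zero _
        rw [hB, sub_zero]
        exact hA
      have hq2 : C (pj w z) ≤ -w := by
        have hCWz : Pj w hw0 (C z) = C (pj w z) := by
          rw [Pj_comm hw0 hbp z, Pj_apply hw0 hz]
        rw [← hCWz, Pj_eval]
        have hA : w ≤ pj w ((C z)⁻) := by
          have hh := pj_mono (a := w) hwCz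
          rwa [pj_self] at hh
        have hB : pj w ((C z)⁺) = 0 := by
          refine pj_disj (posPart_nonneg _) hw0 ?_
          refine le_antisymm ?_ (le_inf (posPart_nonneg _) hw0)
          calc (C z)⁺ ⊓ w ≤ (C z)⁺ ⊓ (C z)⁻ := inf_le_inf_left _ hwCz
          _ = 0 := posPart_inf_negPart_eq_zero _
        rw [hB, zero_sub]
        exact neg_le_neg_iff.2 hA
      have hcomp : pj w y ≤ (n:ℝ) • pj w z := by
        have hPe : Pj w hw0 e = 0 := by
          refine Pj_kills hw0 ?_
          rw [abs_of_nonneg he0]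
          have hve : v ⊓ e = 0 := by rw [hv]; exact pj_res he0 hu0
          refine le_antisymm ?_ (le_inf he0 hw0)
          calc e ⊓ w ≤ e ⊓ v := inf_le_inf_left _ hwv
          _ = 0 := by rw [inf_comm]; exact hve
        have hsub : Pj w hw0 (y - (n:ℝ) • z) = pj w y - (n:ℝ) • pj w z := by
          rw [map_sub, map_smul, Pj_apply hw0 hy, Pj_apply hw0 hz]
        have hsplit : Pj w hw0 (y - (n:ℝ) • z) = Pj w hw0 e - Pj w hw0 ((y - (n:ℝ) • z)⁻) := by
          rw [← map_sub]
          congr 1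
          rw [he, posPart_sub_negPart]
        have hnegp : 0 ≤ Pj w hw0 ((y - (n:ℝ) • z)⁻) := Pj_pos hw0 (negPart_nonneg _)
        have : Pj w hw0 (y - (n:ℝ) • z) ≤ 0 := by
          rw [hsplit, hPe, zero_sub]
          exact neg_nonpos.2 hnegp
        rw [hsub] at this
        exact sub_nonpos.1 this
      have := gridzero hob hbp hw0 hWy0 hWz0 n hcomp hq1 hq2
      exact le_antisymm this hw0
    have hrepr : u = pj e u + pj e' v := by
      have hveq : v = pj e' v := by
        have := hwzero
        rw [hw] at this
        exact (sub_eq_zero.1 this)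
      calc u = pj e u + v := by rw [hv]; abel
      _ = pj e u + pj e' v := by rw [← hveq]
    have h1 : (1 + (n:ℝ)) • pj e u ≤ dy := HY n (Nat.cast_nonneg n)
    have h2 : (1 + (n:ℝ)) • pj e' v ≤ dz := by
      have hmono : pj e' v ≤ pj e' u := pj_mono hvu
      have hz2 := HZ n (Nat.cast_nonneg n)
      rw [hu'] at hz2
      have hn1 : (0:ℝ) ≤ 1 + (n:ℝ) := by
        have := Nat.cast_nonneg (α := ℝ) n
        linarith
      exact (smul_le_smul_of_nonneg_left hmono hn1).trans hz2
    calc (1 + (n:ℝ)) • u = (1 + (n:ℝ)) • (pj e u + pj e' v) := by rw [← hrepr]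
    _ = (1 + (n:ℝ)) • pj e u + (1 + (n:ℝ)) • pj e' v := smul_add _ _ _
    _ ≤ dy + dz := add_le_add h1 h2
  have harch : ∀ n : ℕ, n • u ≤ dy + dz := by
    intro n
    have hk := key n
    have h2 : (n:ℝ) • u ≤ (1 + (n:ℝ)) • u := vl_smul_mono_right (by linarith) hu0
    rw [Nat.cast_smul_eq_nsmul] at h2
    exact h2.trans hk
  exact le_antisymm (vl_arch hu0 harch) hu0

variable {E : Type*} [AddCommGroup E] [ConditionallyCompleteLattice E] [Module ℝ E]
  [CovariantClass E E (· + ·) (· ≤ ·)] [PosSMulMono ℝ E]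

lemma vl_sum_nonneg' {α : Type*} {F : Finset α} {g : α → E} (h : ∀ i ∈ F, 0 ≤ g i) :
    0 ≤ F.sum g :=
  Finset.sum_induction g (fun z => 0 ≤ z) (fun a b ha hb => add_nonneg ha hb) le_rfl h

lemma ortho_cross {C : E →ₗ[ℝ] E} (hob : IsOrderBoundedOp E C) (hbp : IsBandPreserving E C)
    {y z : E} (hy : 0 ≤ y) (hz : 0 ≤ z) : (C y)⁻ ⊓ (C z)⁺ = 0 := by
  have h := star_disj (ob_neg hob) (bp_neg hbp) hy hz
  rwa [LinearMap.neg_apply, LinearMap.neg_apply, posPart_neg, negPart_neg] at h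

lemma ortho_abs_add {C : E →ₗ[ℝ] E} (hob : IsOrderBoundedOp E C) (hbp : IsBandPreserving E C)
    {y z : E} (hy : 0 ≤ y) (hz : 0 ≤ z) : |C (y + z)| = |C y| + |C z| := by
  rw [map_add]
  exact (vl_cross_posPart (star_disj hob hbp hy hz) (ortho_cross hob hbp hy hz)).2.2

lemma ortho_abs_mono {C : E →ₗ[ℝ] E} (hob : IsOrderBoundedOp E C) (hbp : IsBandPreserving E C)
    {y x : E} (hy : 0 ≤ y) (hyx : y ≤ x) : |C y| ≤ |C x| := by
  have hx : y + (x - y) = x := by abel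
  calc |C y| ≤ |C y| + |C (x - y)| := le_add_of_nonneg_right (abs_nonneg _)
  _ = |C (y + (x - y))| := (ortho_abs_add hob hbp hy (sub_nonneg.2 hyx)).symm
  _ = |C x| := by rw [hx]

lemma ortho_abs_abs {C : E →ₗ[ℝ] E} (hob : IsOrderBoundedOp E C) (hbp : IsBandPreserving E C)
    (v : E) : |C v| = |C (|v|)| := by
  have hdisj : |C v⁺| ⊓ |C v⁻| = 0 := by
    refine bp_pair_disj hbp ?_
    rw [abs_of_nonneg (posPart_nonneg v), abs_of_nonneg (negPart_nonneg v)]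
    exact posPart_inf_negPart_eq_zero v
  have h1 : |C v| = |C v⁺| + |C v⁻| := by
    have hv : C v = C v⁺ + -(C v⁻) := by
      have he : C v⁺ + -(C v⁻) = C (v⁺ - v⁻) := by rw [map_sub]; abel
      rw [he, posPart_sub_negPart]
    rw [hv, vl_abs_add_of_disjoint (by rwa [abs_neg]), abs_neg]
  have h2 : |C (|v|)| = |C v⁺| + |C v⁻| := by
    rw [← posPart_add_negPart v]
    exact ortho_abs_add hob hbp (posPart_nonneg v) (negPart_nonneg v)
  rw [h1, h2]

lemma ortho_abs_sum {α : Type*} {C : E →ₗ[ℝ] E} (hob : IsOrderBoundedOp E C)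
    (hbp : IsBandPreserving E C) {F : Finset α} {g : α → E} (hg : ∀ s ∈ F, 0 ≤ g s) :
    |C (F.sum g)| = F.sum (fun s => |C (g s)|) := by
  induction F using Finset.cons_induction with
  | empty => simp
  | cons a F ha ih =>
    rw [Finset.sum_cons, Finset.sum_cons,
      ortho_abs_add hob hbp (hg a (Finset.mem_cons_self a F))
        (vl_sum_nonneg' (fun s hs => hg s (Finset.mem_cons_of_mem hs))),
      ih (fun s hs => hg s (Finset.mem_cons_of_mem hs))]

lemma ortho_maxadd {A B : E →ₗ[ℝ] E} (hobA : IsOrderBoundedOp E A) (hbpA : IsBandPreserving E A)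
    (hobB : IsOrderBoundedOp E B) (hbpB : IsBandPreserving E B) {x₁ x₂ : E}
    (h1 : 0 ≤ x₁) (h2 : 0 ≤ x₂) :
    (A x₁ ⊔ B x₁) + (A x₂ ⊔ B x₂) = (A x₁ + A x₂) ⊔ (B x₁ + B x₂) := by
  refine le_antisymm ?_
    (sup_le (add_le_add le_sup_left le_sup_left) (add_le_add le_sup_right le_sup_right))
  have hR_ob : IsOrderBoundedOp E (A - B) := ob_sub hobA hobB
  have hR_bp : IsBandPreserving E (A - B) := bp_sub hbpA hbpB
  have hcross1 : A x₁ + B x₂ ≤ (A x₁ + A x₂) ⊔ (B x₁ + B x₂) := by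
    rw [← sub_nonpos]
    have hs : A x₁ + B x₂ - ((A x₁ + A x₂) ⊔ (B x₁ + B x₂)) =
        (B x₂ - A x₂) ⊓ (A x₁ - B x₁) := by
      rw [sub_sup]
      congr 1 <;> abel
    rw [hs]
    have hstar := star_disj hR_ob hR_bp h1 h2
    have he1 : (A - B) x₁ = A x₁ - B x₁ := rfl
    have he2 : (A - B) x₂ = A x₂ - B x₂ := rfl
    rw [he1, he2] at hstar
    calc (B x₂ - A x₂) ⊓ (A x₁ - B x₁) ≤ (B x₂ - A x₂)⁺ ⊓ (A x₁ - B x₁)⁺ :=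
          inf_le_inf (le_posPart _) (le_posPart _)
    _ = (A x₁ - B x₁)⁺ ⊓ (A x₂ - B x₂)⁻ := by
        rw [inf_comm]
        congr 1
        rw [← posPart_neg, neg_sub]
    _ = 0 := hstar
  have hcross2 : B x₁ + A x₂ ≤ (A x₁ + A x₂) ⊔ (B x₁ + B x₂) := by
    rw [← sub_nonpos]
    have hs : B x₁ + A x₂ - ((A x₁ + A x₂) ⊔ (B x₁ + B x₂)) =
        (B x₁ - A x₁) ⊓ (A x₂ - B x₂) := by
      rw [sub_sup]
      congr 1 <;> abel
    rw [hs]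
    have hstar := star_disj hR_ob hR_bp h2 h1
    have he1 : (A - B) x₁ = A x₁ - B x₁ := rfl
    have he2 : (A - B) x₂ = A x₂ - B x₂ := rfl
    rw [he1, he2] at hstar
    calc (B x₁ - A x₁) ⊓ (A x₂ - B x₂) ≤ (B x₁ - A x₁)⁺ ⊓ (A x₂ - B x₂)⁺ :=
          inf_le_inf (le_posPart _) (le_posPart _)
    _ = (A x₂ - B x₂)⁺ ⊓ (A x₁ - B x₁)⁻ := by
        rw [inf_comm]
        congr 1
        rw [← posPart_neg, neg_sub]
    _ = 0 := hstar
  have hexp : (A x₁ ⊔ B x₁) + (A x₂ ⊔ B x₂) =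
      ((A x₁ + A x₂) ⊔ (A x₁ + B x₂)) ⊔ ((B x₁ + A x₂) ⊔ (B x₁ + B x₂)) := by
    rw [sup_add (A x₁) (B x₁) (A x₂ ⊔ B x₂), add_sup (A x₂) (B x₂) (A x₁),
      add_sup (A x₂) (B x₂) (B x₁)]
  rw [hexp]
  exact sup_le (sup_le le_sup_left hcross1) (sup_le hcross2 le_sup_right)

/-- The modulus of an orthomorphism as a linear operator. -/
noncomputable def absOp (C : E →ₗ[ℝ] E) (hob : IsOrderBoundedOp E C)
    (hbp : IsBandPreserving E C) : E →ₗ[ℝ] E :=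
  extMap (fun x => |C x|) (fun x y hx hy => ortho_abs_add hob hbp hx hy)
    (fun t x ht hx => by
      show |C (t • x)| = t • |C x|
      rw [map_smul, vl_smul_abs ht])

lemma absOp_apply {C : E →ₗ[ℝ] E} {hob : IsOrderBoundedOp E C} {hbp : IsBandPreserving E C}
    {x : E} (hx : 0 ≤ x) : absOp C hob hbp x = |C x| := extMap_apply hx

lemma absOp_ob {C : E →ₗ[ℝ] E} (hob : IsOrderBoundedOp E C) (hbp : IsBandPreserving E C) :
    IsOrderBoundedOp E (absOp C hob hbp) :=
  extMap_orderBounded (fun x y hx hxy => ortho_abs_mono hob hbp hx hxy)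

lemma absOp_bp {C : E →ₗ[ℝ] E} (hob : IsOrderBoundedOp E C) (hbp : IsBandPreserving E C) :
    IsBandPreserving E (absOp C hob hbp) := by
  refine extMap_bandPreserving (fun x hx => abs_nonneg _) ?_
  intro x w hx hxw
  exact hbp x w (by rwa [abs_of_nonneg hx])

/-- A positive monotone orthomorphism packaged with its properties. -/
structure GoodOp (E : Type*) [AddCommGroup E] [ConditionallyCompleteLattice E] [Module ℝ E]
    [CovariantClass E E (· + ·) (· ≤ ·)] [PosSMulMono ℝ E] where
  op : E →ₗ[ℝ] E
  ob : IsOrderBoundedOp E op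
  bp : IsBandPreserving E op
  pos : ∀ x : E, 0 ≤ x → 0 ≤ op x
  mono : ∀ x y : E, 0 ≤ x → x ≤ y → op x ≤ op y

/-- The modulus of an orthomorphism as a `GoodOp`. -/
noncomputable def goodAbs (C : E →ₗ[ℝ] E) (hob : IsOrderBoundedOp E C)
    (hbp : IsBandPreserving E C) : GoodOp E where
  op := absOp C hob hbp
  ob := absOp_ob hob hbp
  bp := absOp_bp hob hbp
  pos := fun x hx => by rw [absOp_apply hx]; exact abs_nonneg _
  mono := fun x y hx hxy => by
    rw [absOp_apply hx, absOp_apply (hx.trans hxy)]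
    exact ortho_abs_mono hob hbp hx hxy

lemma goodAbs_apply {C : E →ₗ[ℝ] E} {hob : IsOrderBoundedOp E C} {hbp : IsBandPreserving E C}
    {x : E} (hx : 0 ≤ x) : (goodAbs C hob hbp).op x = |C x| :=
  absOp_apply (hob := hob) (hbp := hbp) hx

lemma maxAdd' (A B : GoodOp E) : ∀ x y : E, 0 ≤ x → 0 ≤ y →
    (fun x => A.op x ⊔ B.op x) (x + y) =
    (fun x => A.op x ⊔ B.op x) x + (fun x => A.op x ⊔ B.op x) y := by
  intro x y hx hy
  show A.op (x + y) ⊔ B.op (x + y) = (A.op x ⊔ B.op x) + (A.op y ⊔ B.op y)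
  rw [map_add, map_add]
  exact (ortho_maxadd A.ob A.bp B.ob B.bp hx hy).symm

lemma maxSmul' (A B : GoodOp E) : ∀ (t : ℝ) (x : E), 0 ≤ t → 0 ≤ x →
    (fun x => A.op x ⊔ B.op x) (t • x) = t • (fun x => A.op x ⊔ B.op x) x := by
  intro t x ht hx
  show A.op (t • x) ⊔ B.op (t • x) = t • (A.op x ⊔ B.op x)
  rw [map_smul, map_smul, vl_smul_sup ht]

/-- Pointwise maximum operator of two `GoodOp`s. -/
noncomputable def maxOp (A B : GoodOp E) : E →ₗ[ℝ] E :=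
  extMap (fun x => A.op x ⊔ B.op x) (maxAdd' A B) (maxSmul' A B)

lemma maxOp_apply {A B : GoodOp E} {x : E} (hx : 0 ≤ x) :
    maxOp A B x = A.op x ⊔ B.op x :=
  extMap_apply (hadd := maxAdd' A B) (hsmul := maxSmul' A B) hx

/-- Pointwise maximum of two `GoodOp`s, again a `GoodOp`. -/
noncomputable def goodMax (A B : GoodOp E) : GoodOp E where
  op := maxOp A B
  ob := extMap_orderBounded (fun x y hx hxy =>
    sup_le_sup (A.mono x y hx hxy) (B.mono x y hx hxy))
  bp := by
    refine extMap_bandPreserving (fun x hx => le_trans (A.pos x hx) le_sup_left) ?_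
    intro x w hx hxw
    have hxw' : |x| ⊓ |w| = 0 := by rwa [abs_of_nonneg hx]
    have hA := A.bp x w hxw'
    have hB := B.bp x w hxw'
    have hle : A.op x ⊔ B.op x ≤ |A.op x| + |B.op x| :=
      sup_le ((le_abs_self _).trans (le_add_of_nonneg_right (abs_nonneg _)))
        ((le_abs_self _).trans (le_add_of_nonneg_left (abs_nonneg _)))
    exact vl_disj_of_le_add (le_trans (A.pos x hx) le_sup_left) hle (abs_nonneg _)
      (abs_nonneg _) (abs_nonneg _) hA hB
  pos := fun x hx => by
    rw [maxOp_apply hx]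
    exact le_trans (A.pos x hx) le_sup_left
  mono := fun x y hx hxy => by
    rw [maxOp_apply hx, maxOp_apply (hx.trans hxy)]
    exact sup_le_sup (A.mono x y hx hxy) (B.mono x y hx hxy)

lemma goodMax_apply {A B : GoodOp E} {x : E} (hx : 0 ≤ x) :
    (goodMax A B).op x = A.op x ⊔ B.op x := maxOp_apply hx

/-- Finite running maxima `sup_{k ≤ i ≤ k+K} |T i|` as `GoodOp`s. -/
noncomputable def thetaOp (T : ℕ → E →ₗ[ℝ] E) (hT : ∀ n, IsOrthomorphism E (T n)) (k : ℕ) :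
    ℕ → GoodOp E
  | 0 => goodAbs (T k) (hT k).1 (hT k).2
  | (K+1) => goodMax (thetaOp T hT k K) (goodAbs (T (k+K+1)) (hT (k+K+1)).1 (hT (k+K+1)).2)

lemma theta_ge {T : ℕ → E →ₗ[ℝ] E} {hT : ∀ n, IsOrthomorphism E (T n)} {k K : ℕ} {x : E}
    (hx : 0 ≤ x) : ∀ i : ℕ, k ≤ i → i ≤ k + K → |T i x| ≤ (thetaOp T hT k K).op x := by
  induction K with
  | zero =>
    intro i h1 h2
    have : i = k := le_antisymm (by simpa using h2) h1
    subst this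
    rw [thetaOp, goodAbs_apply hx]
  | succ K ih =>
    intro i h1 h2
    rw [thetaOp, goodMax_apply hx]
    rcases Nat.lt_or_ge i (k + K + 1) with h | h
    · exact le_trans (ih i h1 (by omega)) le_sup_left
    · have : i = k + K + 1 := by omega
      subst this
      rw [goodAbs_apply hx]
      exact le_sup_right

lemma theta_le {T : ℕ → E →ₗ[ℝ] E} {hT : ∀ n, IsOrthomorphism E (T n)} {k K : ℕ} {x b : E}
    (hx : 0 ≤ x) (hb : ∀ i : ℕ, k ≤ i → i ≤ k + K → |T i x| ≤ b) :
    (thetaOp T hT k K).op x ≤ b := by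
  induction K with
  | zero =>
    rw [thetaOp, goodAbs_apply hx]
    exact hb k le_rfl (by omega)
  | succ K ih =>
    rw [thetaOp, goodMax_apply hx]
    refine sup_le (ih fun i h1 h2 => hb i h1 (by omega)) ?_
    rw [goodAbs_apply hx]
    exact hb (k+K+1) (by omega) (by omega)

variable {E : Type*} [AddCommGroup E] [ConditionallyCompleteLattice E] [Module ℝ E]
  [CovariantClass E E (· + ·) (· ≤ ·)] [PosSMulMono ℝ E]

lemma opconv_forward {T : ℕ → E →ₗ[ℝ] E} (h : OpOrderConvNet E T 0) (s : E) :
    OrderConvNet E (fun n => T n s) 0 := by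
  obtain ⟨D, ⟨A₀, hA₀⟩, hdir, hpos, hglb, hev⟩ := h
  set f : E → E := fun x => sInf ((fun A : E →ₗ[ℝ] E => A x) '' D) with hf
  have hne : ∀ x : E, ((fun A : E →ₗ[ℝ] E => A x) '' D).Nonempty :=
    fun x => ⟨A₀ x, ⟨A₀, hA₀, rfl⟩⟩
  have hbdd : ∀ x : E, 0 ≤ x → ∀ b ∈ (fun A : E →ₗ[ℝ] E => A x) '' D, (0:E) ≤ b := by
    rintro x hx b ⟨A, hA, rfl⟩
    have := hpos A hA x hx
    simpa using this
  have hbb : ∀ x : E, 0 ≤ x → BddBelow ((fun A : E →ₗ[ℝ] E => A x) '' D) :=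
    fun x hx => ⟨0, fun b hb => hbdd x hx b hb⟩
  have hf_le : ∀ (x : E), 0 ≤ x → ∀ A ∈ D, f x ≤ A x := by
    intro x hx A hA
    exact csInf_le (hbb x hx) ⟨A, hA, rfl⟩
  have hf_pos : ∀ x : E, 0 ≤ x → 0 ≤ f x :=
    fun x hx => le_csInf (hne x) (fun b hb => hbdd x hx b hb)
  have hAmono : ∀ A ∈ D, ∀ x y : E, x ≤ y → A x ≤ A y := by
    intro A hA x y hxy
    have := hpos A hA (y - x) (sub_nonneg.2 hxy)
    rw [map_sub] at this
    have h2 : (0:E) ≤ A y - A x := by simpa using this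
    exact sub_nonneg.1 h2
  have hf_mono : ∀ x y : E, 0 ≤ x → x ≤ y → f x ≤ f y := by
    intro x y hx hxy
    refine le_csInf (hne y) ?_
    rintro b ⟨A, hA, rfl⟩
    exact (hf_le x hx A hA).trans (hAmono A hA x y hxy)
  have hf_add : ∀ x y : E, 0 ≤ x → 0 ≤ y → f (x + y) = f x + f y := by
    intro x y hx hy
    refine le_antisymm ?_ ?_
    · have step : ∀ A ∈ D, ∀ B ∈ D, f (x + y) ≤ A x + B y := by
        intro A hA B hB
        obtain ⟨Cm, hCm, hCA, hCB⟩ := hdir A hA B hB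
        calc f (x + y) ≤ Cm (x + y) := hf_le _ (add_nonneg hx hy) Cm hCm
        _ = Cm x + Cm y := map_add Cm x y
        _ ≤ A x + B y := add_le_add (hCA x hx) (hCB y hy)
      have h1 : ∀ A ∈ D, f (x + y) - A x ≤ f y := by
        intro A hA
        refine le_csInf (hne y) ?_
        rintro b ⟨B, hB, rfl⟩
        have hs := step A hA B hB
        calc f (x + y) - A x ≤ (A x + B y) - A x := sub_le_sub_right hs _
        _ = B y := by abel
      have h2 : f (x + y) - f y ≤ f x := by
        refine le_csInf (hne x) ?_
        rintro b ⟨A, hA, rfl⟩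
        have h3 := h1 A hA
        have h5 : f (x + y) ≤ f y + A x := sub_le_iff_le_add.1 h3
        exact sub_le_iff_le_add'.2 h5
      exact sub_le_iff_le_add.1 h2
    · refine le_csInf (hne _) ?_
      rintro b ⟨A, hA, rfl⟩
      show f x + f y ≤ A (x + y)
      rw [map_add]
      exact add_le_add (hf_le x hx A hA) (hf_le y hy A hA)
  have hf_smul : ∀ (t : ℝ) (x : E), 0 ≤ t → 0 ≤ x → f (t • x) = t • f x := by
    have one : ∀ (r : ℝ), 0 < r → ∀ z : E, 0 ≤ z → r • f z ≤ f (r • z) := by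
      intro r hr z hz
      refine le_csInf (hne _) ?_
      rintro b ⟨A, hA, rfl⟩
      show r • f z ≤ A (r • z)
      rw [map_smul]
      exact smul_le_smul_of_nonneg_left (hf_le z hz A hA) hr.le
    intro t x ht hx
    rcases eq_or_lt_of_le ht with h0 | h0
    · rw [← h0, zero_smul, zero_smul]
      refine le_antisymm ?_ (hf_pos 0 le_rfl)
      refine csInf_le (hbb 0 le_rfl) ⟨A₀, hA₀, ?_⟩
      simp
    · refine le_antisymm ?_ (one t h0 x hx)
      have h2 := one t⁻¹ (by positivity) (t • x) (smul_nonneg ht hx)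
      rw [inv_smul_smul₀ h0.ne'] at h2
      have h3 := smul_le_smul_of_nonneg_left h2 ht
      rwa [smul_inv_smul₀ h0.ne'] at h3
  have hCop_ob : IsOrderBoundedOp E (extMap f hf_add hf_smul) := extMap_orderBounded hf_mono
  have hCop_le : ∀ A ∈ D, opLE E (extMap f hf_add hf_smul) A := by
    intro A hA x hx
    rw [extMap_apply hx]
    exact hf_le x hx A hA
  have hCop0 := hglb _ hCop_ob hCop_le
  refine ⟨(fun A : E →ₗ[ℝ] E => A |s|) '' D, ⟨A₀ |s|, ⟨A₀, hA₀, rfl⟩⟩, ?_, ⟨?_, ?_⟩, ?_⟩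
  · rintro _ ⟨A, hA, rfl⟩ _ ⟨B, hB, rfl⟩
    obtain ⟨Cm, hCm, hCA, hCB⟩ := hdir A hA B hB
    exact ⟨Cm |s|, ⟨Cm, hCm, rfl⟩, hCA |s| (abs_nonneg s), hCB |s| (abs_nonneg s)⟩
  · rintro _ ⟨A, hA, rfl⟩
    have := hpos A hA |s| (abs_nonneg s)
    simpa using this
  · intro b hb
    have hbf : b ≤ f |s| :=
      le_csInf (hne _) (by rintro _ ⟨A, hA, rfl⟩; exact hb ⟨A, hA, rfl⟩)
    have hle0 : extMap f hf_add hf_smul |s| ≤ (0 : E →ₗ[ℝ] E) |s| := hCop0 |s| (abs_nonneg s)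
    rw [extMap_apply (abs_nonneg s)] at hle0
    have h0 : f |s| ≤ 0 := by simpa using hle0
    exact hbf.trans h0
  · rintro _ ⟨A, hA, rfl⟩
    obtain ⟨i₀, hi⟩ := hev A hA
    refine ⟨i₀, fun n hn => ?_⟩
    obtain ⟨h1, h2⟩ := hi n hn
    have hTp : T n s⁺ ≤ A s⁺ := by
      have := h2 s⁺ (posPart_nonneg s)
      simpa using this
    have hTm2 : -(T n s⁻) ≤ A s⁻ := by
      have := h1 s⁻ (negPart_nonneg s)
      simpa using this
    have hTp2 : -(T n s⁺) ≤ A s⁺ := by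
      have := h1 s⁺ (posPart_nonneg s)
      simpa using this
    have hTm : T n s⁻ ≤ A s⁻ := by
      have := h2 s⁻ (negPart_nonneg s)
      simpa using this
    have hs_eq : A |s| = A s⁺ + A s⁻ := by rw [← map_add, posPart_add_negPart]
    have hTs : T n s = T n s⁺ - T n s⁻ := by rw [← map_sub, posPart_sub_negPart]
    show |T n s - 0| ≤ A |s|
    rw [sub_zero, abs, hs_eq]
    refine sup_le ?_ ?_
    · rw [hTs, sub_eq_add_neg]
      exact add_le_add hTp hTm2
    · rw [hTs, neg_sub, sub_eq_add_neg, add_comm]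
      exact add_le_add (by simpa using hTp2) hTm

open Classical

variable {E : Type*} [AddCommGroup E] [ConditionallyCompleteLattice E] [Module ℝ E]
  [CovariantClass E E (· + ·) (· ≤ ·)] [PosSMulMono ℝ E]

lemma vl_sum_le_sum {α : Type*} {F : Finset α} {g h : α → E} (hle : ∀ i ∈ F, g i ≤ h i) :
    F.sum g ≤ F.sum h := by
  induction F using Finset.cons_induction with
  | empty => simp
  | cons a F ha ih =>
    rw [Finset.sum_cons, Finset.sum_cons]
    exact add_le_add (hle a (Finset.mem_cons_self a F))
      (ih fun i hi => hle i (Finset.mem_cons_of_mem hi))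

lemma vl_ciSup_smul {g : ℕ → E} (hb : BddAbove (Set.range g)) {t : ℝ} (ht : 0 < t) :
    (⨆ n, t • g n) = t • ⨆ n, g n := by
  have hb2 : BddAbove (Set.range fun n => t • g n) := by
    obtain ⟨b, hbb⟩ := hb
    exact ⟨t • b, by rintro _ ⟨n, rfl⟩; exact smul_le_smul_of_nonneg_left (hbb ⟨n, rfl⟩) ht.le⟩
  refine le_antisymm (ciSup_le fun n => smul_le_smul_of_nonneg_left (le_ciSup hb n) ht.le) ?_
  have h1 : ∀ n, g n ≤ t⁻¹ • ⨆ m, t • g m := by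
    intro n
    have h2 := smul_le_smul_of_nonneg_left (le_ciSup hb2 n) (by positivity : (0:ℝ) ≤ t⁻¹)
    rwa [inv_smul_smul₀ ht.ne'] at h2
  have h3 := ciSup_le h1
  have h4 := smul_le_smul_of_nonneg_left h3 ht.le
  rwa [smul_inv_smul₀ ht.ne'] at h4

lemma opconv_backward {T : ℕ → E →ₗ[ℝ] E} (horth : ∀ n, IsOrthomorphism E (T n))
    {S : Set E}
    (hideal : ∀ v : E, ∃ (c : ℝ) (F : Finset E), 0 ≤ c ∧ ↑F ⊆ S ∧
      |v| ≤ c • F.sum (fun s => |s|))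
    (hconv : ∀ s ∈ S, OrderConvNet E (fun n => T n s) 0) :
    OpOrderConvNet E T 0 := by
  choose DD hDne hDdir hDglb hDev using hconv
  -- boundedness of |T n s| for s ∈ S
  have hBdd : ∀ s (hs : s ∈ S), BddAbove (Set.range fun n : ℕ => |T n s|) := by
    intro s hs
    obtain ⟨d₀, hd₀⟩ := hDne s hs
    obtain ⟨n₀, hn₀⟩ := hDev s hs d₀ hd₀
    refine ⟨((Finset.range (n₀+1)).sup' (by simp) (fun i => |T i s|)) ⊔ d₀, ?_⟩
    rintro _ ⟨n, rfl⟩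
    rcases le_or_gt n₀ n with h | h
    · have := hn₀ n h
      rw [sub_zero] at this
      exact le_sup_of_le_right this
    · exact le_sup_of_le_left
        (Finset.le_sup' (f := fun i => |T i s|) (Finset.mem_range.2 (by omega)))
  -- tail suprema
  have htl_bdd : ∀ (k : ℕ) s (hs : s ∈ S), BddAbove (Set.range fun n : ℕ => |T (n + k) s|) := by
    intro k s hs
    obtain ⟨b, hb⟩ := hBdd s hs
    exact ⟨b, by rintro _ ⟨n, rfl⟩; exact hb ⟨n + k, rfl⟩⟩
  set tl : ℕ → E → E := fun k s => ⨆ n : ℕ, |T (n + k) s| with htl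
  have htl_le : ∀ (k : ℕ) s (hs : s ∈ S) (i : ℕ), k ≤ i → |T i s| ≤ tl k s := by
    intro k s hs i hki
    have hieq : i = (i - k) + k := by omega
    rw [hieq]
    exact le_ciSup (htl_bdd k s hs) (i - k)
  have htl_anti : ∀ (k k' : ℕ) s (hs : s ∈ S), k ≤ k' → tl k' s ≤ tl k s := by
    intro k k' s hs hkk
    exact ciSup_le fun n => htl_le k s hs (n + k') (by omega)
  -- bound for theta operators through the ideal hypothesis
  have hTbound : ∀ (k : ℕ) (x : E), 0 ≤ x → ∀ (c : ℝ) (F : Finset E), 0 ≤ c → ↑F ⊆ S →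
      x ≤ c • F.sum (fun s => |s|) → ∀ K,
      (thetaOp T horth k K).op x ≤ c • F.sum (fun s => tl k s) := by
    intro k x hx c F hc hFS hxle K
    refine theta_le hx ?_
    intro i h1 h2
    calc |T i x| ≤ |T i (c • F.sum (fun s => |s|))| :=
          ortho_abs_mono (horth i).1 (horth i).2 hx hxle
    _ = c • |T i (F.sum (fun s => |s|))| := by rw [map_smul, vl_smul_abs hc]
    _ = c • F.sum (fun s => |T i (|s|)|) := by
          rw [ortho_abs_sum (horth i).1 (horth i).2 (fun s _ => abs_nonneg s)]
    _ = c • F.sum (fun s => |T i s|) := by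
          congr 1
          exact Finset.sum_congr rfl fun s _ =>
            (ortho_abs_abs (horth i).1 (horth i).2 s).symm
    _ ≤ c • F.sum (fun s => tl k s) := by
          refine smul_le_smul_of_nonneg_left ?_ hc
          exact vl_sum_le_sum fun s hsF => htl_le k s (hFS hsF) i h1
  have hth_bdd : ∀ (k : ℕ) (x : E), 0 ≤ x →
      BddAbove (Set.range fun K => (thetaOp T horth k K).op x) := by
    intro k x hx
    obtain ⟨c, F, hc, hFS, hxle⟩ := hideal x
    exact ⟨c • F.sum (fun s => tl k s), by
      rintro _ ⟨K, rfl⟩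
      exact hTbound k x hx c F hc hFS ((le_abs_self x).trans hxle) K⟩
  set G : ℕ → E → E := fun k x => ⨆ K : ℕ, (thetaOp T horth k K).op x with hG
  have hG_ge : ∀ (k K : ℕ) (x : E), 0 ≤ x → (thetaOp T horth k K).op x ≤ G k x :=
    fun k K x hx => le_ciSup (hth_bdd k x hx) K
  have hth_monoK : ∀ (k K K' : ℕ) (x : E), 0 ≤ x → K ≤ K' →
      (thetaOp T horth k K).op x ≤ (thetaOp T horth k K').op x := by
    intro k K K' x hx hKK
    exact theta_le hx fun i h1 h2 => theta_ge hx i h1 (by omega)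
  have hG_pos : ∀ (k : ℕ) (x : E), 0 ≤ x → 0 ≤ G k x := by
    intro k x hx
    exact le_trans ((thetaOp T horth k 0).pos x hx) (hG_ge k 0 x hx)
  have hG_mono : ∀ (k : ℕ) (x y : E), 0 ≤ x → x ≤ y → G k x ≤ G k y := by
    intro k x y hx hxy
    exact ciSup_le fun K => ((thetaOp T horth k K).mono x y hx hxy).trans (hG_ge k K y (hx.trans hxy))
  have hG_add : ∀ (k : ℕ) (x y : E), 0 ≤ x → 0 ≤ y → G k (x + y) = G k x + G k y := by
    intro k x y hx hy
    refine le_antisymm ?_ ?_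
    · refine ciSup_le fun K => ?_
      rw [map_add]
      exact add_le_add (hG_ge k K x hx) (hG_ge k K y hy)
    · have key : ∀ K K' : ℕ, (thetaOp T horth k K).op x + (thetaOp T horth k K').op y ≤
          G k (x + y) := by
        intro K K'
        have h1 := hth_monoK k K (max K K') x hx (le_max_left _ _)
        have h2 := hth_monoK k K' (max K K') y hy (le_max_right _ _)
        calc (thetaOp T horth k K).op x + (thetaOp T horth k K').op y ≤
            (thetaOp T horth k (max K K')).op x + (thetaOp T horth k (max K K')).op y :=
              add_le_add h1 h2
        _ = (thetaOp T horth k (max K K')).op (x + y) := (map_add _ x y).symm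
        _ ≤ G k (x + y) := hG_ge k _ _ (add_nonneg hx hy)
      have h1 : ∀ K' : ℕ, G k x ≤ G k (x + y) - (thetaOp T horth k K').op y := by
        intro K'
        exact ciSup_le fun K => le_sub_iff_add_le.2 (key K K')
      have h2 : ∀ K' : ℕ, (thetaOp T horth k K').op y ≤ G k (x + y) - G k x := by
        intro K'
        have h3 := h1 K'
        have h4 : G k x + (thetaOp T horth k K').op y ≤ G k (x + y) := le_sub_iff_add_le.1 h3
        rw [le_sub_iff_add_le, add_comm]
        exact h4
      have h5 : G k y ≤ G k (x + y) - G k x := ciSup_le h2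
      rw [le_sub_iff_add_le, add_comm] at h5
      exact h5
  have hG_smul : ∀ (k : ℕ) (t : ℝ) (x : E), 0 ≤ t → 0 ≤ x → G k (t • x) = t • G k x := by
    intro k t x ht hx
    rcases eq_or_lt_of_le ht with h0 | h0
    · rw [← h0, zero_smul, zero_smul]
      have hz : ∀ K : ℕ, (thetaOp T horth k K).op (0:E) = 0 := fun K => map_zero _
      show (⨆ K, (thetaOp T horth k K).op (0:E)) = 0
      simp only [hz, ciSup_const]
    · have he : (fun K => (thetaOp T horth k K).op (t • x)) =
          fun K => t • (thetaOp T horth k K).op x := by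
        funext K
        exact map_smul _ t x
      show (⨆ K, (thetaOp T horth k K).op (t • x)) = t • ⨆ K, (thetaOp T horth k K).op x
      rw [he]
      exact vl_ciSup_smul (hth_bdd k x hx) h0
  -- the tail operators
  set M : ℕ → E →ₗ[ℝ] E := fun k =>
    extMap (G k) (fun x y hx hy => hG_add k x y hx hy) (fun t x ht hx => hG_smul k t x ht hx)
    with hM
  have hM_apply : ∀ (k : ℕ) (x : E), 0 ≤ x → M k x = G k x := by
    intro k x hx
    exact extMap_apply hx
  have hM_le : ∀ k k' : ℕ, k ≤ k' → opLE E (M k') (M k) := by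
    intro k k' hkk x hx
    rw [hM_apply k' x hx, hM_apply k x hx]
    refine ciSup_le fun K => ?_
    refine theta_le hx ?_
    intro i h1 h2
    exact le_trans (theta_ge hx i (by omega) (by omega : i ≤ k + (i - k))) (hG_ge k (i - k) x hx)
  refine ⟨Set.range M, ⟨M 0, ⟨0, rfl⟩⟩, ?_, ?_, ?_, ?_⟩
  · rintro _ ⟨k1, rfl⟩ _ ⟨k2, rfl⟩
    exact ⟨M (max k1 k2), ⟨max k1 k2, rfl⟩, hM_le k1 (max k1 k2) (le_max_left _ _),
      hM_le k2 (max k1 k2) (le_max_right _ _)⟩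
  · rintro _ ⟨k, rfl⟩ x hx
    have := hG_pos k x hx
    rw [← hM_apply k x hx] at this
    simpa using this
  · -- the greatest lower bound property
    intro C hCob hCle x hx
    obtain ⟨c, F, hc, hFS, hxle⟩ := hideal x
    show C x ≤ (0 : E →ₗ[ℝ] E) x
    rw [LinearMap.zero_apply]
    rcases eq_or_lt_of_le hc with hc0 | hc0
    · have hx0 : x = 0 := by
        rw [← hc0, zero_smul] at hxle
        have h1 : x ≤ 0 := (le_abs_self x).trans hxle
        have h2 : -x ≤ 0 := (neg_le_abs x).trans hxle
        have h3 : 0 ≤ x := by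
          have := neg_le_neg_iff.2 h2
          simpa using this
        exact le_antisymm h1 h3
      rw [hx0, map_zero]
    · -- elimination by induction over F
      have elim : ∀ (F' : Finset E) (hFS' : ↑F' ⊆ S) (b : E),
          (∀ g : E → E, (∀ s, ∀ hsF : s ∈ F', g s ∈ DD s (hFS' hsF)) → b ≤ F'.sum g) →
          b ≤ 0 := by
        intro F'
        induction F' using Finset.cons_induction with
        | empty =>
          intro hFS' b hb
          have := hb (fun _ => 0) (by intro s hsF; exact absurd hsF (by simp))
          simpa using this
        | cons a F' ha ih =>
          intro hFS' b hb
          have haS : a ∈ S := hFS' (Finset.mem_cons_self a F')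
          have hFS'' : ↑F' ⊆ S := fun s hs => hFS' (Finset.mem_cons_of_mem hs)
          refine ih hFS'' b ?_
          intro g hg
          have hlb : (b - F'.sum g) ∈ lowerBounds (DD a haS) := by
            intro d hd
            have hb2 := hb (Function.update g a d) ?_
            · rw [Finset.sum_cons, Function.update_self] at hb2
              have hsum_eq : F'.sum (Function.update g a d) = F'.sum g :=
                Finset.sum_congr rfl fun s hs =>
                  Function.update_of_ne (by rintro rfl; exact ha hs) d g
              rw [hsum_eq] at hb2
              exact sub_le_iff_le_add.2 hb2
            · intro s hsF
              rcases Finset.mem_cons.1 hsF with heq | hsF'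
              · subst heq
                rw [Function.update_self]
                exact hd
              · rw [Function.update_of_ne (by rintro rfl; exact ha hsF') d g]
                exact hg s hsF'
          have h0 := (hDglb a haS).2 hlb
          exact sub_nonpos.1 h0
      have key : ∀ g : E → E, (∀ s, ∀ hsF : s ∈ F, g s ∈ DD s (hFS hsF)) →
          c⁻¹ • C x ≤ F.sum g := by
        intro g hg
        have hks : ∀ s, ∀ hsF : s ∈ F, ∃ k : ℕ, tl k s ≤ g s := by
          intro s hsF
          obtain ⟨i₀, hi₀⟩ := hDev s (hFS hsF) (g s) (hg s hsF)
          refine ⟨i₀, ciSup_le fun n => ?_⟩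
          have := hi₀ (n + i₀) (by omega)
          rwa [sub_zero] at this
        choose kf hkf using hks
        set k : ℕ := F.sup (fun s => if h : s ∈ F then kf s h else 0) with hk
        have hkf_le : ∀ s, ∀ hsF : s ∈ F, kf s hsF ≤ k := by
          intro s hsF
          have h7 : (if h : s ∈ F then kf s h else 0) ≤ k :=
            Finset.le_sup (f := fun s => if h : s ∈ F then kf s h else 0) hsF
          rwa [dif_pos hsF] at h7
        have h1 : C x ≤ M k x := hCle (M k) ⟨k, rfl⟩ x hx
        have h2 : M k x ≤ c • F.sum (fun s => tl k s) := by
          rw [hM_apply k x hx]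
          exact ciSup_le fun K =>
            hTbound k x hx c F hc hFS ((le_abs_self x).trans hxle) K
        have h3 : F.sum (fun s => tl k s) ≤ F.sum g := by
          refine vl_sum_le_sum fun s hsF => ?_
          exact (htl_anti (kf s hsF) k s (hFS hsF) (hkf_le s hsF)).trans (hkf s hsF)
        have h4 : C x ≤ c • F.sum g :=
          (h1.trans h2).trans (smul_le_smul_of_nonneg_left h3 hc)
        have h5 := smul_le_smul_of_nonneg_left h4 (by positivity : (0:ℝ) ≤ c⁻¹)
        rwa [inv_smul_smul₀ hc0.ne'] at h5
      have hb0 := elim F hFS (c⁻¹ • C x) key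
      have h6 := smul_le_smul_of_nonneg_left hb0 hc0.le
      rwa [smul_inv_smul₀ hc0.ne', smul_zero] at h6
  · -- eventual domination
    rintro _ ⟨k, rfl⟩
    refine ⟨k, fun n hn => ⟨?_, ?_⟩⟩
    · intro x hx
      show (0 - T n) x ≤ M k x
      rw [LinearMap.sub_apply, LinearMap.zero_apply, zero_sub]
      rw [hM_apply k x hx]
      calc -(T n x) ≤ |T n x| := neg_le_abs _
      _ ≤ (thetaOp T horth k (n - k)).op x := theta_ge hx n (by omega) (by omega)
      _ ≤ G k x := hG_ge k (n - k) x hx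
    · intro x hx
      show (T n - 0) x ≤ M k x
      rw [LinearMap.sub_apply, LinearMap.zero_apply, sub_zero]
      rw [hM_apply k x hx]
      calc T n x ≤ |T n x| := le_abs_self _
      _ ≤ (thetaOp T horth k (n - k)).op x := theta_ge hx n (by omega) (by omega)
      _ ≤ G k x := hG_ge k (n - k) x hx

end VLatticeDevelopment

/-- for a sequence `(T n)` of orthomorphisms of a Dedekind complete vector
lattice and a nonempty `S ⊆ E` generating `E` as an ideal, order convergence `T n → 0`
in the order bounded operators is equivalent to `T n s → 0` in order for every `s ∈ S`.
In particular, for a strong order unit `e`, `T n → 0` in order iff `T n e → 0` in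
order. -/
theorem stmt16
    (T : ℕ → E →ₗ[ℝ] E)
    (horth : ∀ n, IsOrthomorphism E (T n))
    (S : Set E) (hSne : S.Nonempty)
    (hideal : ∀ v : E, ∃ (c : ℝ) (F : Finset E), 0 ≤ c ∧ ↑F ⊆ S ∧
      |v| ≤ c • F.sum (fun s => |s|)) :
    (OpOrderConvNet E T 0 ↔ ∀ s ∈ S, OrderConvNet E (fun n => T n s) 0) ∧
    (∀ e : E, 0 ≤ e → (∀ v : E, ∃ c : ℝ, 0 ≤ c ∧ |v| ≤ c • e) →
      (OpOrderConvNet E T 0 ↔ OrderConvNet E (fun n => T n e) 0)) := by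
  classical
  have main : ∀ (S' : Set E),
      (∀ v : E, ∃ (c : ℝ) (F : Finset E), 0 ≤ c ∧ ↑F ⊆ S' ∧
        |v| ≤ c • F.sum (fun s => |s|)) →
      (OpOrderConvNet E T 0 ↔ ∀ s ∈ S', OrderConvNet E (fun n => T n s) 0) := by
    intro S' hid
    constructor
    · intro h s hs
      exact opconv_forward h s
    · intro h
      exact opconv_backward horth hid h
  refine ⟨main S hideal, ?_⟩
  intro e he hune
  have hid' : ∀ v : E, ∃ (c : ℝ) (F : Finset E), 0 ≤ c ∧ ↑F ⊆ ({e} : Set E) ∧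
      |v| ≤ c • F.sum (fun s => |s|) := by
    intro v
    obtain ⟨c, hc, hle⟩ := hune v
    refine ⟨c, {e}, hc, by simp, ?_⟩
    rw [Finset.sum_singleton, abs_of_nonneg he]
    exact hle
  rw [main {e} hid']
  constructor
  · intro h
    exact h e rfl
  · intro h s hs
    have : s = e := Set.mem_singleton_iff.1 hs
    rw [this]
    exact h
end

section
/- Let E be a Dedekind complete vector lattice and T an orthomorphism of E. If a net (x_α) in E is unbounded order convergent to 0, then (Tx_α) is unbounded order convergent to 0 in E. -/
variable (E : Type*) [AddCommGroup E] [ConditionallyCompleteLattice E] [Module ℝ E]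
  [CovariantClass E E (· + ·) (· ≤ ·)] [PosSMulMono ℝ E]

/-!
Fix `u ≥ 0`, let `m` bound `|T|` on `[-u, u]`, and let `0 < ε ≤ 1`. Truncating `x` at `±εu`
gives `x₁` with `|T x₁| ≤ εm`, while `T (x - x₁)` stays disjoint from `(εu - |x|)⁺` because
`|x - x₁| ≤ (|x| - εu)⁺`; writing `εu = εu ∧ |x| + (εu - |x|)⁺` then yields
`|T x| ∧ u ≤ εm + ε⁻¹ (|x| ∧ u)`. Taking the infimum over `ε = 1/(n+1)` turns a dominating
family for `|x_α| ∧ u` into one for `|T x_α| ∧ u`; it still has infimum `0` because Dedekind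
completeness makes `E` Archimedean, which kills the `εm` term.
-/

section LatticeGroup

variable {α : Type*} [Lattice α] [AddCommGroup α] [AddLeftMono α]

lemma inf_add_le_inf_add_inf {f p r : α} (hf : 0 ≤ f) (hp : 0 ≤ p) (hr : 0 ≤ r) :
    f ⊓ (p + r) ≤ f ⊓ p + f ⊓ r := by
  rw [add_inf f r (f ⊓ p), inf_add f p r]
  exact le_inf (inf_le_left.trans (le_add_of_nonneg_left (le_inf hf hp)))
    (le_inf (inf_le_left.trans (le_add_of_nonneg_right hr)) inf_le_right)

lemma add_inf_le_add_inf {s t u : α} (hs : 0 ≤ s) : (s + t) ⊓ u ≤ s + t ⊓ u := by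
  rw [add_inf]
  exact inf_le_inf_left _ (le_add_of_nonneg_left hs)

lemma inf_le_inf_of_inf_posPart_sub_eq_zero {s a b : α} (hs : 0 ≤ s) (ha : 0 ≤ a) (hb : 0 ≤ b)
    (h : s ⊓ (a - b)⁺ = 0) : s ⊓ a ≤ a ⊓ b :=
  calc s ⊓ a = s ⊓ (a ⊓ b + (a - b)⁺) := by rw [inf_eq_sub_posPart_sub a b, sub_add_cancel]
    _ ≤ s ⊓ (a ⊓ b) + s ⊓ (a - b)⁺ :=
      inf_add_le_inf_add_inf hs (le_inf ha hb) (posPart_nonneg _)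
    _ ≤ a ⊓ b := by rw [h, add_zero]; exact inf_le_right

lemma abs_inf_sup_neg_le {a : α} (ha : 0 ≤ a) (x : α) : |x ⊓ a ⊔ -a| ≤ a :=
  abs_le'.2 ⟨sup_le inf_le_right ((neg_nonpos.2 ha).trans ha), neg_le.1 le_sup_right⟩

lemma abs_sub_inf_sup_neg_le (a x : α) : |x - (x ⊓ a ⊔ -a)| ≤ (|x| - a)⁺ := by
  refine abs_le'.2 ⟨?_, ?_⟩
  · calc x - (x ⊓ a ⊔ -a) ≤ x - x ⊓ a := sub_le_sub_left le_sup_left x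
      _ = (x - a)⁺ := by rw [sub_inf, sub_self, posPart_def, sup_comm]
      _ ≤ (|x| - a)⁺ := posPart_mono (sub_le_sub_right (le_abs_self x) a)
  · calc -(x - (x ⊓ a ⊔ -a)) = (x ⊓ a ⊔ -a) - x := neg_sub _ _
      _ ≤ (x ⊔ -a) - x := sub_le_sub_right (sup_le_sup_right inf_le_left _) x
      _ = (-x - a)⁺ := by rw [sup_sub, sub_self, posPart_def, sup_comm, sub_eq_add_neg,
          sub_eq_add_neg, add_comm]
      _ ≤ (|x| - a)⁺ := posPart_mono (sub_le_sub_right (neg_le_abs x) a)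

end LatticeGroup

lemma nonpos_of_forall_succ_nsmul_le {α : Type*} [ConditionallyCompleteLattice α] [AddCommGroup α]
    [AddLeftMono α] {w m : α} (h : ∀ n : ℕ, (n + 1) • w ≤ m) : w ≤ 0 := by
  have hbdd : BddAbove (Set.range fun n : ℕ => (n + 1) • w) := ⟨m, by rintro _ ⟨n, rfl⟩; exact h n⟩
  have hsup : ⨆ n : ℕ, (n + 1) • w ≤ (⨆ n : ℕ, (n + 1) • w) - w :=
    ciSup_le fun n => le_sub_iff_add_le.2 <| by
      simpa only [succ_nsmul] using le_ciSup hbdd (n + 1)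
  simpa using hsup

section OrderedModule

variable {𝕜 α β : Type*} [Field 𝕜] [LinearOrder 𝕜] [IsStrictOrderedRing 𝕜]
  [Lattice α] [AddCommGroup α] [AddLeftMono α] [Module 𝕜 α] [PosSMulMono 𝕜 α]
  [Lattice β] [AddCommGroup β] [AddLeftMono β] [Module 𝕜 β] [PosSMulMono 𝕜 β]

lemma abs_smul_of_nonneg {c : 𝕜} (hc : 0 ≤ c) (a : α) : |c • a| = c • |a| := by
  rcases hc.eq_or_lt with rfl | hc
  · simp
  · simpa only [abs, OrderIso.smulRight_apply, smul_neg] using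
      ((OrderIso.smulRight hc).map_sup a (-a)).symm

lemma inf_le_inv_smul_inf_smul {s : α} (hs : 0 ≤ s) (u : α) {ε : 𝕜} (hε : 0 < ε) (hε1 : ε ≤ 1) :
    s ⊓ u ≤ ε⁻¹ • (s ⊓ ε • u) := by
  have hs' : s ≤ ε⁻¹ • s := by
    have : 0 ≤ (ε⁻¹ - 1) • s := smul_nonneg (sub_nonneg.2 (one_le_inv₀ hε |>.2 hε1)) hs
    rwa [sub_smul, one_smul, sub_nonneg] at this
  calc s ⊓ u ≤ ε⁻¹ • s ⊓ u := inf_le_inf_right u hs'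
    _ = ε⁻¹ • (s ⊓ ε • u) := by
      simpa only [OrderIso.smulRight_apply, inv_smul_smul₀ hε.ne'] using
        ((OrderIso.smulRight (inv_pos.2 hε)).map_inf s (ε • u)).symm

lemma LinearMap.abs_apply_le_smul (T : α →ₗ[𝕜] β) {u : α} {m : β}
    (hm : ∀ z, |z| ≤ u → |T z| ≤ m) {ε : 𝕜} (hε : 0 < ε) {z : α} (hz : |z| ≤ ε • u) :
    |T z| ≤ ε • m := by
  have hz' : |ε⁻¹ • z| ≤ u := by
    rw [abs_smul_of_nonneg (inv_nonneg.2 hε.le), inv_smul_le_iff_of_pos hε]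
    exact hz
  calc |T z| = ε • |T (ε⁻¹ • z)| := by
        rw [map_smul, abs_smul_of_nonneg (inv_nonneg.2 hε.le), smul_inv_smul₀ hε.ne']
    _ ≤ ε • m := smul_le_smul_of_nonneg_left (hm _ hz') hε.le

end OrderedModule

section Orthomorphism

variable {V : Type*} [AddCommGroup V] [ConditionallyCompleteLattice V] [Module ℝ V] [AddLeftMono V]

lemma IsOrderBoundedOp.exists_abs_apply_le {T : V →ₗ[ℝ] V} (hT : IsOrderBoundedOp V T) (u : V) :
    ∃ m, ∀ z, |z| ≤ u → |T z| ≤ m := by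
  obtain ⟨c, d, hcd⟩ := hT (-u) u
  refine ⟨d ⊔ -c, fun z hz => ?_⟩
  obtain ⟨hc, hd⟩ := hcd z (neg_le.1 ((neg_le_abs z).trans hz)) ((le_abs_self z).trans hz)
  exact sup_le_sup hd (neg_le_neg_iff.2 hc)

lemma IsBandPreserving.abs_apply_inf_le [PosSMulMono ℝ V] {T : V →ₗ[ℝ] V}
    (hT : IsBandPreserving V T) {u m : V}
    (hu : 0 ≤ u) (hm : ∀ z, |z| ≤ u → |T z| ≤ m) {ε : ℝ} (hε : 0 < ε) (hε1 : ε ≤ 1) (x : V) :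
    |T x| ⊓ u ≤ ε • m + ε⁻¹ • (|x| ⊓ u) := by
  set a := ε • u
  have ha : 0 ≤ a := smul_nonneg hε.le hu
  have hau : a ≤ u := by
    have : 0 ≤ (1 - ε) • u := smul_nonneg (sub_nonneg.2 hε1) hu
    rwa [sub_smul, one_smul, sub_nonneg] at this
  set x₁ := x ⊓ a ⊔ -a
  have hx₁ : |T x₁| ≤ ε • m := T.abs_apply_le_smul hm hε (abs_inf_sup_neg_le ha x)
  have hx₂ : |T (x - x₁)| ⊓ (a - |x|)⁺ = 0 := by
    have hdisj : |x - x₁| ⊓ |(a - |x|)⁺| = 0 := by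
      rw [abs_of_nonneg (posPart_nonneg _)]
      refine le_antisymm ?_ (le_inf (abs_nonneg _) (posPart_nonneg _))
      calc |x - x₁| ⊓ (a - |x|)⁺ ≤ (|x| - a)⁺ ⊓ (a - |x|)⁺ :=
            inf_le_inf_right _ (abs_sub_inf_sup_neg_le a x)
        _ = 0 := by rw [← neg_sub |x| a, posPart_neg, posPart_inf_negPart_eq_zero]
    simpa only [abs_of_nonneg (posPart_nonneg _)] using hT _ _ hdisj
  calc |T x| ⊓ u ≤ (|T x₁| + |T (x - x₁)|) ⊓ u := by
        gcongr
        simpa only [map_sub, add_sub_cancel] using abs_add_le (T x₁) (T x - T x₁)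
    _ ≤ |T x₁| + |T (x - x₁)| ⊓ u := add_inf_le_add_inf (abs_nonneg _)
    _ ≤ ε • m + ε⁻¹ • (|T (x - x₁)| ⊓ a) :=
        add_le_add hx₁ (inf_le_inv_smul_inf_smul (abs_nonneg _) u hε hε1)
    _ ≤ ε • m + ε⁻¹ • (|x| ⊓ u) := by
        have : |T (x - x₁)| ⊓ a ≤ |x| ⊓ u := calc
          _ ≤ a ⊓ |x| := inf_le_inf_of_inf_posPart_sub_eq_zero (abs_nonneg _) ha (abs_nonneg x) hx₂
          _ ≤ |x| ⊓ u := by rw [inf_comm]; exact inf_le_inf_left _ hau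
        gcongr

lemma nonpos_of_forall_le_inv_smul_add_smul [PosSMulMono ℝ V] {D : Set V} (hD : IsGLB D 0)
    {v m : V} (hm : 0 ≤ m) (h : ∀ d ∈ D, ∀ n : ℕ, v ≤ ((n : ℝ) + 1)⁻¹ • m + ((n : ℝ) + 1) • d) :
    v ≤ 0 := by
  have hvm : ∀ n : ℕ, v ≤ ((n : ℝ) + 1)⁻¹ • m := fun n => by
    have hn : (0 : ℝ) < n + 1 := by positivity
    have hlow : ((n : ℝ) + 1)⁻¹ • (v - ((n : ℝ) + 1)⁻¹ • m) ∈ lowerBounds D := fun d hd =>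
      (inv_smul_le_iff_of_pos hn).2 (sub_le_iff_le_add'.2 (h d hd n))
    simpa only [smul_zero, sub_nonpos] using (inv_smul_le_iff_of_pos hn).1 (hD.2 hlow)
  refine (le_posPart v).trans (nonpos_of_forall_succ_nsmul_le (m := m) fun n => ?_)
  have hn : (0 : ℝ) < n + 1 := by positivity
  rw [← Nat.cast_smul_eq_nsmul ℝ, Nat.cast_succ, ← le_inv_smul_iff_of_pos hn]
  exact sup_le (hvm n) (smul_nonneg (inv_nonneg.2 hn.le) hm)

lemma OrderConvNet.of_abs_le_smul_add_inv_smul [PosSMulMono ℝ V] {ι : Type*} [Preorder ι]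
    {y z : ι → V} (hz : OrderConvNet V z 0) {m : V} (hm : 0 ≤ m)
    (h : ∀ i (ε : ℝ), 0 < ε → ε ≤ 1 → |y i| ≤ ε • m + ε⁻¹ • |z i|) : OrderConvNet V y 0 := by
  obtain ⟨D, hDne, hDdir, hDglb, hDtail⟩ := hz
  have hD0 : ∀ d ∈ D, 0 ≤ d := fun d hd => hDglb.1 hd
  set bound : ℕ → V → V := fun n d => ((n : ℝ) + 1)⁻¹ • m + ((n : ℝ) + 1) • d
  have hbound0 : ∀ n d, 0 ≤ d → 0 ≤ bound n d := fun n d hd =>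
    add_nonneg (smul_nonneg (by positivity) hm) (smul_nonneg (by positivity) hd)
  set β : V → V := fun d => ⨅ n, bound n d
  have hβle : ∀ d, 0 ≤ d → ∀ n, β d ≤ bound n d := fun d hd n =>
    ciInf_le ⟨0, by rintro _ ⟨k, rfl⟩; exact hbound0 k d hd⟩ n
  have hβmono : ∀ d d', 0 ≤ d → d ≤ d' → β d ≤ β d' := fun d d' hd hdd' =>
    le_ciInf fun n => (hβle d hd n).trans <| by simp only [bound]; gcongr
  refine ⟨β '' D, hDne.image β, ?_, ⟨?_, ?_⟩, ?_⟩
  · rintro _ ⟨d₁, h₁, rfl⟩ _ ⟨d₂, h₂, rfl⟩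
    obtain ⟨d₃, h₃, h₃₁, h₃₂⟩ := hDdir d₁ h₁ d₂ h₂
    exact ⟨β d₃, ⟨d₃, h₃, rfl⟩, hβmono _ _ (hD0 d₃ h₃) h₃₁, hβmono _ _ (hD0 d₃ h₃) h₃₂⟩
  · rintro _ ⟨d, hd, rfl⟩
    exact le_ciInf fun n => hbound0 n d (hD0 d hd)
  · exact fun v hv => nonpos_of_forall_le_inv_smul_add_smul hDglb hm fun d hd n =>
      (hv ⟨d, hd, rfl⟩).trans (hβle d (hD0 d hd) n)
  · rintro _ ⟨d, hd, rfl⟩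
    obtain ⟨i₀, hi₀⟩ := hDtail d hd
    refine ⟨i₀, fun i hi => le_ciInf fun n => ?_⟩
    have hn : (1 : ℝ) ≤ n + 1 := le_add_of_nonneg_left n.cast_nonneg
    have hyz := h i ((n : ℝ) + 1)⁻¹ (by positivity) (inv_le_one_of_one_le₀ hn)
    rw [inv_inv] at hyz
    rw [sub_zero]
    exact hyz.trans (by simp only [bound]; gcongr; simpa only [sub_zero] using hi₀ i hi)

end Orthomorphism

/-- orthomorphisms of a Dedekind complete vector lattice preserve unbounded
order convergence: if `x i → 0` in unbounded order, then `T (x i) → 0` in unbounded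
order. -/
theorem stmt17
    (T : E →ₗ[ℝ] E) (hT : IsOrthomorphism E T)
    {ι : Type*} [Preorder ι] (x : ι → E) (hx : UOConvNet E x 0) :
    UOConvNet E (fun i => T (x i)) 0 := by
  intro u hu
  obtain ⟨m, hm⟩ := hT.1.exists_abs_apply_le u
  have hm0 : 0 ≤ m := by simpa using hm 0 (by simpa using hu)
  have hinf : ∀ z : E, |(|z - 0| ⊓ u)| = |z| ⊓ u := fun z => by
    rw [sub_zero, abs_of_nonneg (le_inf (abs_nonneg z) hu)]
  refine OrderConvNet.of_abs_le_smul_add_inv_smul (hx u hu) hm0 fun i ε hε hε1 => ?_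
  simp only [hinf]
  exact hT.2.abs_apply_inf_le hu hm hε hε1 (x i)
end
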